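/- arXiv:2407.20011 — 10 statements merged into one kernel-verified Lean document; each statement's English description precedes it below -/
import Mathlib

section
/- Let ε > 0 and let u, v, a, χ ∈ ℝ satisfy 0 ≤ χ ≤ 1, χ = 1 whenever u > v, and χ = 0 whenever u < v. Then (H_ε(a − v) − χ)·(u − a) ≤ ε. -/
/-- The regularized Heaviside function `H_ε`. -/
noncomputable def Heps (ε t : ℝ) : ℝ := max 0 (min (t / ε) 1)

/-!
Write `H = H_ε(a - v)`. If `u ≥ a`, the factor `H - χ` is nonpositive: either `χ = 1`, or
`a ≤ u ≤ v` and then `H = 0`. If `u < a`, the only nontrivial case is `u ≥ v`, where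
`(χ - H)(a - u) ≤ (1 - H)(a - v)`, and `(1 - H_ε(t)) t ≤ ε` for every `t`
because `H_ε(t) = 1` as soon as `t ≥ ε`.
-/

lemma Heps_nonneg (ε t : ℝ) : 0 ≤ Heps ε t := le_max_left _ _

lemma Heps_le_one (ε t : ℝ) : Heps ε t ≤ 1 := max_le zero_le_one (min_le_right _ _)

lemma Heps_eq_zero_of_nonpos {ε t : ℝ} (hε : 0 ≤ ε) (ht : t ≤ 0) : Heps ε t = 0 :=
  max_eq_left (min_le_of_left_le (div_nonpos_of_nonpos_of_nonneg ht hε))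

lemma Heps_eq_one_of_le {ε t : ℝ} (hε : 0 < ε) (ht : ε ≤ t) : Heps ε t = 1 := by
  rw [Heps, min_eq_right ((one_le_div hε).2 ht), max_eq_right zero_le_one]

lemma one_sub_Heps_mul_le {ε : ℝ} (hε : 0 < ε) (t : ℝ) : (1 - Heps ε t) * t ≤ ε := by
  rcases le_or_gt ε t with hεt | htε
  · rw [Heps_eq_one_of_le hε hεt, sub_self, zero_mul]
    exact hε.le
  · have h0 := Heps_nonneg ε t
    have h1 := Heps_le_one ε t
    nlinarith

theorem stmt2 (ε u v a χ : ℝ) (hε : 0 < ε)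
    (hχ0 : 0 ≤ χ) (hχ1 : χ ≤ 1)
    (hgt : u > v → χ = 1) (hlt : u < v → χ = 0) :
    (Heps ε (a - v) - χ) * (u - a) ≤ ε := by
  have hH0 := Heps_nonneg ε (a - v)
  have hH1 := Heps_le_one ε (a - v)
  rcases le_or_gt a u with hau | hua
  · rcases le_or_gt u v with huv | hvu
    · rw [Heps_eq_zero_of_nonpos hε.le (by linarith)]
      nlinarith
    · rw [hgt hvu]
      nlinarith
  · rcases lt_or_ge u v with huv | hvu
    · rw [hlt huv]
      nlinarith
    · calc (Heps ε (a - v) - χ) * (u - a) = (χ - Heps ε (a - v)) * (a - u) := by ring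
        _ ≤ (1 - Heps ε (a - v)) * (a - u) := by gcongr
        _ ≤ (1 - Heps ε (a - v)) * (a - v) := by gcongr
        _ ≤ ε := one_sub_Heps_mul_le hε _
end

section
/- Let p ≥ 2. For all vectors a, b ∈ ℝ^d one has (|a|^{p−2}a − |b|^{p−2}b)·(a − b) ≥ 2^{2−p}·|a − b|^p, where · denotes the Euclidean inner product and |·| the Euclidean norm. -/
open scoped RealInnerProductSpace

open Real

-- real-valued superadditivity of rpow
private lemma add_rpow_le_rpow_add' {a b p : ℝ} (ha : 0 ≤ a) (hb : 0 ≤ b) (hp : 1 ≤ p) :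
    a ^ p + b ^ p ≤ (a + b) ^ p := by
  have h := NNReal.add_rpow_le_rpow_add a.toNNReal b.toNNReal hp
  have h2 := NNReal.coe_le_coe.2 h
  rw [← Real.toNNReal_add ha hb] at h2
  simpa [NNReal.coe_rpow, Real.coe_toNNReal a ha, Real.coe_toNNReal b hb,
    Real.coe_toNNReal _ (add_nonneg ha hb)] using h2

private lemma two_mean {a b p : ℝ} (ha : 0 ≤ a) (hb : 0 ≤ b) (hp : 1 ≤ p) :
    (a + b) ^ p ≤ 2 ^ (p - 1) * (a ^ p + b ^ p) := by
  have h := NNReal.rpow_add_le_mul_rpow_add_rpow a.toNNReal b.toNNReal hp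
  have h2 := NNReal.coe_le_coe.2 h
  rw [← Real.toNNReal_add ha hb] at h2
  simpa [NNReal.coe_rpow, Real.coe_toNNReal a ha, Real.coe_toNNReal b hb,
    Real.coe_toNNReal _ (add_nonneg ha hb)] using h2

private lemma rpow_step {x : ℝ} (hx : 0 ≤ x) {r : ℝ} (hr : 0 ≤ r) :
    x ^ (r + 1) = x ^ r * x := by
  rw [Real.rpow_add' hx (by positivity), Real.rpow_one]

private lemma sq_rpow_half {x p : ℝ} (hx : 0 ≤ x) : ((x ^ 2 : ℝ)) ^ (p / 2) = x ^ p := by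
  rw [← Real.rpow_natCast x 2, ← Real.rpow_mul hx]
  congr 1
  ring

-- Endpoint 1: c = s*t, assuming t ≤ s
private lemma E1aux {p : ℝ} (hp : 2 ≤ p) {s t : ℝ} (ht : 0 ≤ t) (hts : t ≤ s) :
    2 ^ (2 - p) * (((s - t) ^ 2 : ℝ)) ^ (p / 2) ≤
      s ^ p + t ^ p - (s ^ (p - 2) + t ^ (p - 2)) * (s * t) := by
  have hs : 0 ≤ s := ht.trans hts
  have hst : 0 ≤ s - t := sub_nonneg.2 hts
  rw [sq_rpow_half hst]
  have h1 : (2 : ℝ) ^ (2 - p) ≤ 1 :=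
    Real.rpow_le_one_of_one_le_of_nonpos one_le_two (by linarith)
  have hsuper : (s - t) ^ (p - 1) + t ^ (p - 1) ≤ s ^ (p - 1) := by
    have := add_rpow_le_rpow_add' hst ht (by linarith : (1:ℝ) ≤ p - 1)
    rwa [sub_add_cancel] at this
  have hq : (0:ℝ) ≤ p - 2 := by linarith
  have hsp : s ^ p = s ^ (p - 1) * s := by
    have := rpow_step hs (by linarith : (0:ℝ) ≤ p - 1); rw [← this]; ring_nf
  have htp : t ^ p = t ^ (p - 1) * t := by
    have := rpow_step ht (by linarith : (0:ℝ) ≤ p - 1); rw [← this]; ring_nf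
  have hsp1 : s ^ (p - 1) = s ^ (p - 2) * s := by
    have := rpow_step hs hq; rw [← this]; ring_nf
  have htp1 : t ^ (p - 1) = t ^ (p - 2) * t := by
    have := rpow_step ht hq; rw [← this]; ring_nf
  have hstp : (s - t) ^ p = (s - t) ^ (p - 1) * (s - t) := by
    have := rpow_step hst (by linarith : (0:ℝ) ≤ p - 1); rw [← this]; ring_nf
  have key : (s - t) ^ p ≤ (s - t) * (s ^ (p - 1) - t ^ (p - 1)) := by
    rw [hstp]
    have h2 : (s - t) ^ (p - 1) ≤ s ^ (p - 1) - t ^ (p - 1) := by linarith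
    nlinarith [Real.rpow_nonneg hst (p - 1)]
  have hLHS : 2 ^ (2 - p) * (s - t) ^ p ≤ (s - t) ^ p := by
    nlinarith [Real.rpow_nonneg hst p]
  have : (s - t) * (s ^ (p - 1) - t ^ (p - 1)) =
      s ^ p + t ^ p - (s ^ (p - 2) + t ^ (p - 2)) * (s * t) := by
    rw [hsp, htp, hsp1, htp1]; ring
  linarith

-- symmetric version
private lemma E1 {p : ℝ} (hp : 2 ≤ p) {s t : ℝ} (hs : 0 ≤ s) (ht : 0 ≤ t) :
    2 ^ (2 - p) * (((s - t) ^ 2 : ℝ)) ^ (p / 2) ≤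
      s ^ p + t ^ p - (s ^ (p - 2) + t ^ (p - 2)) * (s * t) := by
  rcases le_total t s with h | h
  · exact E1aux hp ht h
  · have := E1aux hp hs h
    have hsq : ((t - s) ^ 2 : ℝ) = (s - t) ^ 2 := by ring
    rw [hsq] at this
    linarith [this]

-- Endpoint 2: c = -(s*t)
private lemma E2 {p : ℝ} (hp : 2 ≤ p) {s t : ℝ} (hs : 0 ≤ s) (ht : 0 ≤ t) :
    2 ^ (2 - p) * (((s + t) ^ 2 : ℝ)) ^ (p / 2) ≤
      s ^ p + t ^ p + (s ^ (p - 2) + t ^ (p - 2)) * (s * t) := by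
  have hst : 0 ≤ s + t := add_nonneg hs ht
  rw [sq_rpow_half hst]
  have hmean : (s + t) ^ (p - 1) ≤ 2 ^ (p - 2) * (s ^ (p - 1) + t ^ (p - 1)) := by
    have := two_mean hs ht (by linarith : (1:ℝ) ≤ p - 1)
    have he : p - 1 - 1 = p - 2 := by ring
    rwa [he] at this
  have hq : (0:ℝ) ≤ p - 2 := by linarith
  have hsp : s ^ p = s ^ (p - 1) * s := by
    have := rpow_step hs (by linarith : (0:ℝ) ≤ p - 1); rw [← this]; ring_nf
  have htp : t ^ p = t ^ (p - 1) * t := by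
    have := rpow_step ht (by linarith : (0:ℝ) ≤ p - 1); rw [← this]; ring_nf
  have hsp1 : s ^ (p - 1) = s ^ (p - 2) * s := by
    have := rpow_step hs hq; rw [← this]; ring_nf
  have htp1 : t ^ (p - 1) = t ^ (p - 2) * t := by
    have := rpow_step ht hq; rw [← this]; ring_nf
  have hstp : (s + t) ^ p = (s + t) ^ (p - 1) * (s + t) := by
    have := rpow_step hst (by linarith : (0:ℝ) ≤ p - 1); rw [← this]; ring_nf
  have hcancel : (2:ℝ) ^ (2 - p) * 2 ^ (p - 2) = 1 := by
    rw [← Real.rpow_add (by norm_num : (0:ℝ) < 2)]; norm_num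
  have h2pos : (0:ℝ) < 2 ^ (2 - p) := Real.rpow_pos_of_pos (by norm_num) _
  calc 2 ^ (2 - p) * (s + t) ^ p
      = 2 ^ (2 - p) * ((s + t) ^ (p - 1) * (s + t)) := by rw [hstp]
    _ ≤ 2 ^ (2 - p) * (2 ^ (p - 2) * (s ^ (p - 1) + t ^ (p - 1)) * (s + t)) := by
        apply mul_le_mul_of_nonneg_left _ h2pos.le
        exact mul_le_mul_of_nonneg_right hmean hst
    _ = (s ^ (p - 1) + t ^ (p - 1)) * (s + t) := by
        rw [show (2:ℝ) ^ (2 - p) * (2 ^ (p - 2) * (s ^ (p - 1) + t ^ (p - 1)) * (s + t))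
          = (2 ^ (2 - p) * 2 ^ (p - 2)) * ((s ^ (p - 1) + t ^ (p - 1)) * (s + t)) by ring,
          hcancel, one_mul]
    _ = s ^ p + t ^ p + (s ^ (p - 2) + t ^ (p - 2)) * (s * t) := by
        rw [hsp, htp, hsp1, htp1]; ring

-- the key scalar lemma
private lemma keylem {p : ℝ} (hp : 2 ≤ p) {s t c : ℝ} (hs : 0 ≤ s) (ht : 0 ≤ t)
    (hc : |c| ≤ s * t) :
    2 ^ (2 - p) * ((s ^ 2 + t ^ 2 - 2 * c : ℝ)) ^ (p / 2) ≤
      s ^ p + t ^ p - (s ^ (p - 2) + t ^ (p - 2)) * c := by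
  rcases eq_or_lt_of_le (mul_nonneg hs ht) with h0 | h0
  · -- s*t = 0, so c = 0
    have hc0 : c = 0 := by
      have := abs_nonneg c
      have : |c| = 0 := le_antisymm (hc.trans h0.ge) (abs_nonneg c)
      exact abs_eq_zero.1 this
    subst hc0
    rcases mul_eq_zero.1 h0.symm with h | h
    · subst h
      have := E1 hp le_rfl ht
      simpa using this
    · subst h
      have := E1 hp hs le_rfl
      simpa using this
  · -- s*t > 0
    set S := s * t with hS
    set lam := (S - c) / (2 * S) with hlam
    set mu := (S + c) / (2 * S) with hmu
    have hcle : c ≤ S := (le_abs_self c).trans hc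
    have hcge : -S ≤ c := by
      have := (neg_abs_le c); linarith [(abs_le.1 (le_refl |c|)), hc, neg_le_neg hc]
    have hlam0 : 0 ≤ lam := by
      apply div_nonneg (by linarith) (by linarith)
    have hmu0 : 0 ≤ mu := by
      apply div_nonneg (by linarith) (by linarith)
    have hsum : lam + mu = 1 := by
      rw [hlam, hmu, ← add_div, div_eq_one_iff_eq (mul_ne_zero two_ne_zero h0.ne')]; ring
    have hconv := (convexOn_rpow (by linarith : (1:ℝ) ≤ p / 2)).2
      (Set.mem_Ici.2 (by positivity : (0:ℝ) ≤ (s + t) ^ 2))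
      (Set.mem_Ici.2 (by positivity : (0:ℝ) ≤ (s - t) ^ 2))
      hlam0 hmu0 hsum
    simp only [smul_eq_mul] at hconv
    have hcomb : lam * ((s + t) ^ 2 : ℝ) + mu * ((s - t) ^ 2 : ℝ) = s ^ 2 + t ^ 2 - 2 * c := by
      rw [hlam, hmu, div_mul_eq_mul_div, div_mul_eq_mul_div, ← add_div,
        div_eq_iff (mul_ne_zero two_ne_zero h0.ne'), hS]; ring
    rw [hcomb] at hconv
    have h2pos : (0:ℝ) < 2 ^ (2 - p) := Real.rpow_pos_of_pos (by norm_num) _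
    have step1 : 2 ^ (2 - p) * ((s ^ 2 + t ^ 2 - 2 * c : ℝ)) ^ (p / 2) ≤
        lam * (2 ^ (2 - p) * (((s + t) ^ 2 : ℝ)) ^ (p / 2)) +
        mu * (2 ^ (2 - p) * (((s - t) ^ 2 : ℝ)) ^ (p / 2)) := by
      have := mul_le_mul_of_nonneg_left hconv h2pos.le
      linarith [this]
    have he2 := E2 hp hs ht
    have he1 := E1 hp hs ht
    have step2 : lam * (2 ^ (2 - p) * (((s + t) ^ 2 : ℝ)) ^ (p / 2)) +
        mu * (2 ^ (2 - p) * (((s - t) ^ 2 : ℝ)) ^ (p / 2)) ≤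
        lam * (s ^ p + t ^ p + (s ^ (p - 2) + t ^ (p - 2)) * S) +
        mu * (s ^ p + t ^ p - (s ^ (p - 2) + t ^ (p - 2)) * S) := by
      gcongr
    have step3 : lam * (s ^ p + t ^ p + (s ^ (p - 2) + t ^ (p - 2)) * S) +
        mu * (s ^ p + t ^ p - (s ^ (p - 2) + t ^ (p - 2)) * S) =
        s ^ p + t ^ p - (s ^ (p - 2) + t ^ (p - 2)) * c := by
      have hSne : S ≠ 0 := ne_of_gt h0
      rw [hlam, hmu, div_mul_eq_mul_div, div_mul_eq_mul_div, ← add_div,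
        div_eq_iff (mul_ne_zero two_ne_zero hSne)]
      ring
    linarith

theorem stmt5 (d : ℕ) (p : ℝ) (hp : 2 ≤ p) (a b : EuclideanSpace ℝ (Fin d)) :
    (2 : ℝ) ^ (2 - p) * ‖a - b‖ ^ p ≤
      ⟪(‖a‖ ^ (p - 2)) • a - (‖b‖ ^ (p - 2)) • b, a - b⟫ := by
  have hs0 : 0 ≤ ‖a‖ := norm_nonneg a
  have ht0 : 0 ≤ ‖b‖ := norm_nonneg b
  have hcs : |⟪a, b⟫| ≤ ‖a‖ * ‖b‖ := abs_real_inner_le_norm a b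
  have hinner : ⟪(‖a‖ ^ (p - 2)) • a - (‖b‖ ^ (p - 2)) • b, a - b⟫ =
      ‖a‖ ^ (p - 2) * ‖a‖ ^ 2 + ‖b‖ ^ (p - 2) * ‖b‖ ^ 2 -
        (‖a‖ ^ (p - 2) + ‖b‖ ^ (p - 2)) * ⟪a, b⟫ := by
    simp only [inner_sub_left, inner_sub_right, real_inner_smul_left,
      real_inner_self_eq_norm_sq]
    rw [real_inner_comm b a]
    ring
  have hspow : ‖a‖ ^ (p - 2) * ‖a‖ ^ 2 = ‖a‖ ^ p := by
    rw [← Real.rpow_natCast ‖a‖ 2, ← Real.rpow_add' hs0 (by norm_num; linarith)]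
    norm_num
  have htpow : ‖b‖ ^ (p - 2) * ‖b‖ ^ 2 = ‖b‖ ^ p := by
    rw [← Real.rpow_natCast ‖b‖ 2, ← Real.rpow_add' ht0 (by norm_num; linarith)]
    norm_num
  have hnorm : ‖a - b‖ ^ p = ((‖a‖ ^ 2 + ‖b‖ ^ 2 - 2 * ⟪a, b⟫ : ℝ)) ^ (p / 2) := by
    have h1 : ‖a - b‖ ^ (2:ℕ) = ‖a‖ ^ 2 + ‖b‖ ^ 2 - 2 * ⟪a, b⟫ := by
      rw [norm_sub_sq_real]; ring
    rw [← h1, ← Real.rpow_natCast ‖a - b‖ 2, ← Real.rpow_mul (norm_nonneg _)]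
    congr 1
    ring
  rw [hinner, hspow, htpow, hnorm]
  exact keylem hp hs0 ht0 hcs
end

section
/- Let 1 < p ≤ 2. For all vectors a, b ∈ ℝ^d that are not both zero, one has (|a|^{p−2}a − |b|^{p−2}b)·(a − b) ≥ (p−1)·|a − b|²·(|a| + |b|)^{p−2}, where · denotes the Euclidean inner product and |·| the Euclidean norm. -/
/-!
With `A = ‖a‖`, `B = ‖b‖`, both sides split into a part depending only on `A, B` and a multiple
of the Cauchy–Schwarz defect `A * B - ⟪a, b⟫ ≥ 0`. The first part is a scalar inequality: the
tangent-line bound for the concave map `x ↦ x ^ (p - 1)` at `max A B`, combined with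
`(A + B) ^ (p - 2) ≤ (max A B) ^ (p - 2)`. For the defect part, `(A + B) ^ (p - 2)` is below both
`A ^ (p - 2)` and `B ^ (p - 2)` and `p - 1 ≤ 1`.
-/

open scoped RealInnerProductSpace

lemma rpow_le_rpow_add_mul_sub {r α β : ℝ} (hr0 : 0 ≤ r) (hr1 : r ≤ 1) (hα : 0 < α)
    (hβ : 0 ≤ β) : β ^ r ≤ α ^ r + r * α ^ (r - 1) * (β - α) := by
  have h := rpow_one_add_le_one_add_mul_self (s := β / α - 1)
    (by linarith [div_nonneg hβ hα.le]) hr0 hr1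
  rw [add_sub_cancel, Real.div_rpow hβ hα.le, div_le_iff₀ (by positivity)] at h
  calc β ^ r ≤ (1 + r * (β / α - 1)) * α ^ r := h
    _ = α ^ r + r * α ^ (r - 1) * (β - α) := by
      rw [Real.rpow_sub_one hα.ne']; field_simp

lemma sub_one_mul_sub_sq_mul_rpow_add_le {p α β : ℝ} (hp1 : 1 ≤ p) (hp2 : p ≤ 2) (hα : 0 ≤ α)
    (hβ : 0 ≤ β) :
    (p - 1) * (α - β) ^ 2 * (α + β) ^ (p - 2) ≤ (α ^ (p - 1) - β ^ (p - 1)) * (α - β) := by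
  wlog hβα : β ≤ α generalizing α β
  · calc (p - 1) * (α - β) ^ 2 * (α + β) ^ (p - 2)
        = (p - 1) * (β - α) ^ 2 * (β + α) ^ (p - 2) := by rw [add_comm]; ring
      _ ≤ (β ^ (p - 1) - α ^ (p - 1)) * (β - α) := this hβ hα (le_of_not_ge hβα)
      _ = (α ^ (p - 1) - β ^ (p - 1)) * (α - β) := by ring
  rcases hβα.eq_or_lt with rfl | hβα
  · simp
  have hα : 0 < α := hβ.trans_lt hβα
  have tangent := rpow_le_rpow_add_mul_sub (by linarith) (by linarith) hα hβ (r := p - 1)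
  rw [show p - 1 - 1 = p - 2 by ring] at tangent
  have mono : (α + β) ^ (p - 2) ≤ α ^ (p - 2) :=
    Real.rpow_le_rpow_of_nonpos hα (by linarith) (by linarith)
  calc (p - 1) * (α - β) ^ 2 * (α + β) ^ (p - 2)
      ≤ (p - 1) * (α - β) ^ 2 * α ^ (p - 2) := by gcongr
    _ = (p - 1) * α ^ (p - 2) * (α - β) * (α - β) := by ring
    _ ≤ (α ^ (p - 1) - β ^ (p - 1)) * (α - β) := by gcongr; linarith

section InnerProductSpace

variable {E : Type*} [NormedAddCommGroup E] [InnerProductSpace ℝ E] {p : ℝ}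

lemma inner_rpow_norm_smul_sub_eq (hp : p ≠ 1) (a b : E) :
    ⟪‖a‖ ^ (p - 2) • a - ‖b‖ ^ (p - 2) • b, a - b⟫ =
      (‖a‖ ^ (p - 1) - ‖b‖ ^ (p - 1)) * (‖a‖ - ‖b‖) +
        (‖a‖ * ‖b‖ - ⟪a, b⟫) * (‖a‖ ^ (p - 2) + ‖b‖ ^ (p - 2)) := by
  have rpow_mul_self : ∀ x : ℝ, 0 ≤ x → x ^ (p - 2) * x = x ^ (p - 1) := fun x hx => by
    rw [← Real.rpow_add_one' hx (by contrapose! hp; linarith)]; ring_nf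
  simp only [inner_sub_left, inner_sub_right, real_inner_smul_left, real_inner_self_eq_norm_sq,
    real_inner_comm a b]
  linear_combination (‖a‖ - ‖b‖) * rpow_mul_self _ (norm_nonneg a) -
    (‖a‖ - ‖b‖) * rpow_mul_self _ (norm_nonneg b)

lemma mul_rpow_norm_add_le (hp : p ≤ 2) (a b : E) :
    (‖a‖ * ‖b‖ - ⟪a, b⟫) * (2 * (p - 1) * (‖a‖ + ‖b‖) ^ (p - 2)) ≤
      (‖a‖ * ‖b‖ - ⟪a, b⟫) * (‖a‖ ^ (p - 2) + ‖b‖ ^ (p - 2)) := by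
  rcases eq_or_ne a 0 with rfl | ha
  · simp
  rcases eq_or_ne b 0 with rfl | hb
  · simp
  refine mul_le_mul_of_nonneg_left ?_ (sub_nonneg.2 (real_inner_le_norm a b))
  have hA := norm_pos_iff.2 ha
  have hB := norm_pos_iff.2 hb
  have le_a : (‖a‖ + ‖b‖) ^ (p - 2) ≤ ‖a‖ ^ (p - 2) :=
    Real.rpow_le_rpow_of_nonpos hA (by linarith) (by linarith)
  have le_b : (‖a‖ + ‖b‖) ^ (p - 2) ≤ ‖b‖ ^ (p - 2) :=
    Real.rpow_le_rpow_of_nonpos hB (by linarith) (by linarith)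
  have hAB : 0 ≤ (‖a‖ + ‖b‖) ^ (p - 2) := Real.rpow_nonneg (by positivity) _
  nlinarith [mul_nonneg (sub_nonneg.2 hp) hAB]

theorem sub_one_mul_norm_sub_sq_mul_rpow_le_inner (hp1 : 1 < p) (hp2 : p ≤ 2) (a b : E) :
    (p - 1) * ‖a - b‖ ^ 2 * (‖a‖ + ‖b‖) ^ (p - 2) ≤
      ⟪‖a‖ ^ (p - 2) • a - ‖b‖ ^ (p - 2) • b, a - b⟫ := by
  rw [inner_rpow_norm_smul_sub_eq hp1.ne' a b, norm_sub_sq_real]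
  linear_combination
    sub_one_mul_sub_sq_mul_rpow_add_le hp1.le hp2 (norm_nonneg a) (norm_nonneg b) +
      mul_rpow_norm_add_le hp2 a b

end InnerProductSpace

theorem stmt6_general (d : ℕ) (p : ℝ) (hp1 : 1 < p) (hp2 : p ≤ 2)
    (a b : EuclideanSpace ℝ (Fin d)) :
    (p - 1) * ‖a - b‖ ^ 2 * (‖a‖ + ‖b‖) ^ (p - 2) ≤
      ⟪(‖a‖ ^ (p - 2)) • a - (‖b‖ ^ (p - 2)) • b, a - b⟫ :=
  sub_one_mul_norm_sub_sq_mul_rpow_le_inner hp1 hp2 a b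

theorem stmt6 (d : ℕ) (p : ℝ) (hp1 : 1 < p) (hp2 : p ≤ 2)
    (a b : EuclideanSpace ℝ (Fin d)) (hab : a ≠ 0 ∨ b ≠ 0) :
    (p - 1) * ‖a - b‖ ^ 2 * (‖a‖ + ‖b‖) ^ (p - 2) ≤
      ⟪(‖a‖ ^ (p - 2)) • a - (‖b‖ ^ (p - 2)) • b, a - b⟫ :=
  stmt6_general d p hp1 hp2 a b
end

section
/- Let 1 < p ≤ 2 and let F, G ∈ L^p(ℝ^d; ℝ^d) be vector fields (with respect to Lebesgue measure) with ‖F‖_{L^p} + ‖G‖_{L^p} > 0. Then ∫_{ℝ^d} (|F(x)|^{p−2}F(x) − |G(x)|^{p−2}G(x))·(F(x) − G(x)) dx ≥ (p−1)·‖F − G‖_{L^p(ℝ^d;ℝ^d)}² / (‖F‖_{L^p(ℝ^d;ℝ^d)} + ‖G‖_{L^p(ℝ^d;ℝ^d)})^{2−p}, where the integrand is nonnegative almost everywhere so the integral is well-defined in [0, ∞]. -/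
open MeasureTheory
open scoped RealInnerProductSpace ENNReal

private lemma one_dim_ineq {p α β : ℝ} (hp1 : 1 < p) (hp2 : p ≤ 2)
    (hβ : 0 < β) (hβα : β ≤ α) :
    (p - 1) * ((α + β) ^ (p - 2)) * (α - β) ≤ α ^ (p - 1) - β ^ (p - 1) := by
  have hα : 0 < α := lt_of_lt_of_le hβ hβα
  have hC : (α + β) ^ (p - 2) ≤ α ^ (p - 2) :=
    Real.rpow_le_rpow_of_nonpos hα (by linarith) (by linarith)
  have hCnn : (0:ℝ) ≤ (α + β) ^ (p - 2) := Real.rpow_nonneg (by linarith) _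
  have hAnn : (0:ℝ) ≤ α ^ (p - 2) := Real.rpow_nonneg hα.le _
  have hgm : β ^ (p - 1) ≤ (2 - p) * α ^ (p - 1) + (p - 1) * (α ^ (p - 2) * β) := by
    have hkey : (α ^ (p - 1)) ^ (2 - p) * (α ^ (p - 2) * β) ^ (p - 1) = β ^ (p - 1) := by
      rw [Real.mul_rpow hAnn hβ.le, ← Real.rpow_mul hα.le, ← Real.rpow_mul hα.le,
        ← mul_assoc, ← Real.rpow_add hα,
        show (p - 1) * (2 - p) + (p - 2) * (p - 1) = 0 by ring, Real.rpow_zero, one_mul]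
    calc β ^ (p - 1) = (α ^ (p - 1)) ^ (2 - p) * (α ^ (p - 2) * β) ^ (p - 1) := hkey.symm
      _ ≤ (2 - p) * α ^ (p - 1) + (p - 1) * (α ^ (p - 2) * β) :=
        Real.geom_mean_le_arith_mean2_weighted (by linarith) (by linarith)
          (Real.rpow_nonneg hα.le _) (mul_nonneg hAnn hβ.le) (by ring)
  have hA1 : (p - 1) * (α ^ (p - 2) * α) = (p - 1) * α ^ (p - 1) := by
    rw [show p - 1 = (p - 2) + 1 by ring, Real.rpow_add_one hα.ne']
  have hint : (p - 1) * ((α + β) ^ (p - 2)) * (α - β)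
      ≤ (p - 1) * (α ^ (p - 2)) * (α - β) :=
    mul_le_mul_of_nonneg_right (mul_le_mul_of_nonneg_left hC (by linarith)) (by linarith)
  nlinarith [hint, hgm, hA1]

private lemma key_aux {E : Type*} [NormedAddCommGroup E] [InnerProductSpace ℝ E]
    {p : ℝ} (hp1 : 1 < p) (hp2 : p ≤ 2) (a b : E) (hba : ‖b‖ ≤ ‖a‖) :
    (p - 1) * (‖a - b‖ ^ 2 * (‖a‖ + ‖b‖) ^ (p - 2)) ≤
      ⟪(‖a‖ ^ (p - 2)) • a - (‖b‖ ^ (p - 2)) • b, a - b⟫ := by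
  have hexp : ⟪(‖a‖ ^ (p - 2)) • a - (‖b‖ ^ (p - 2)) • b, a - b⟫
      = ‖a‖ ^ (p - 2) * ‖a‖ ^ 2 + ‖b‖ ^ (p - 2) * ‖b‖ ^ 2
        - (‖a‖ ^ (p - 2) + ‖b‖ ^ (p - 2)) * ⟪a, b⟫ := by
    simp only [inner_sub_left, inner_sub_right, real_inner_smul_left,
      real_inner_self_eq_norm_sq, real_inner_comm b a]
    ring
  have hab : ‖a - b‖ ^ 2 = ‖a‖ ^ 2 - 2 * ⟪a, b⟫ + ‖b‖ ^ 2 := norm_sub_sq_real a b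
  rcases eq_or_lt_of_le (norm_nonneg b) with hb0 | hb0
  · -- ‖b‖ = 0, so b = 0
    have hb : b = 0 := norm_eq_zero.mp hb0.symm
    subst hb
    simp only [sub_zero, norm_zero, add_zero, smul_zero]
    rw [real_inner_smul_left, real_inner_self_eq_norm_sq]
    nlinarith [Real.rpow_nonneg (norm_nonneg a) (p - 2), sq_nonneg ‖a‖,
      mul_nonneg (Real.rpow_nonneg (norm_nonneg a) (p - 2)) (sq_nonneg ‖a‖)]
  · -- 0 < ‖b‖
    have ha0 : 0 < ‖a‖ := lt_of_lt_of_le hb0 hba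
    have hI : ⟪a, b⟫ = (‖a‖ ^ 2 + ‖b‖ ^ 2 - ‖a - b‖ ^ 2) / 2 := by linarith
    rw [hexp, hI]
    have hAB : ‖a‖ ^ (p - 2) ≤ ‖b‖ ^ (p - 2) :=
      Real.rpow_le_rpow_of_nonpos hb0 hba (by linarith)
    have hCA : (‖a‖ + ‖b‖) ^ (p - 2) ≤ ‖a‖ ^ (p - 2) :=
      Real.rpow_le_rpow_of_nonpos ha0 (by linarith) (by linarith)
    have hCnn : (0:ℝ) ≤ (‖a‖ + ‖b‖) ^ (p - 2) := Real.rpow_nonneg (by positivity) _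
    have ht : ‖a‖ - ‖b‖ ≤ ‖a - b‖ := norm_sub_norm_le a b
    have ht2 : (‖a‖ - ‖b‖) ^ 2 ≤ ‖a - b‖ ^ 2 := by
      nlinarith [norm_nonneg (a - b)]
    have hbase := one_dim_ineq hp1 hp2 hb0 hba
    have hAα : ‖a‖ ^ (p - 1) = ‖a‖ ^ (p - 2) * ‖a‖ := by
      rw [show p - 1 = (p - 2) + 1 by ring, Real.rpow_add_one ha0.ne']
    have hBβ : ‖b‖ ^ (p - 1) = ‖b‖ ^ (p - 2) * ‖b‖ := by
      rw [show p - 1 = (p - 2) + 1 by ring, Real.rpow_add_one hb0.ne']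
    have h2 : (p - 1) * ((‖a‖ + ‖b‖) ^ (p - 2)) * (‖a‖ - ‖b‖)
        ≤ ‖a‖ ^ (p - 2) * ‖a‖ - ‖b‖ ^ (p - 2) * ‖b‖ := by
      rw [← hAα, ← hBβ]; exact hbase
    have h5 : (0:ℝ) ≤ ((‖a‖ ^ (p - 2) + ‖b‖ ^ (p - 2)) / 2 - (p - 1) * (‖a‖ + ‖b‖) ^ (p - 2))
        * (‖a - b‖ ^ 2 - (‖a‖ - ‖b‖) ^ 2) :=
      mul_nonneg (by nlinarith) (by linarith)
    have h6 : (0:ℝ) ≤ (‖a‖ - ‖b‖) *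
        ((‖a‖ ^ (p - 2) * ‖a‖ - ‖b‖ ^ (p - 2) * ‖b‖)
          - (p - 1) * ((‖a‖ + ‖b‖) ^ (p - 2)) * (‖a‖ - ‖b‖)) :=
      mul_nonneg (by linarith) (by linarith)
    nlinarith [h5, h6]

private lemma key_ineq {E : Type*} [NormedAddCommGroup E] [InnerProductSpace ℝ E]
    {p : ℝ} (hp1 : 1 < p) (hp2 : p ≤ 2) (a b : E) :
    (p - 1) * (‖a - b‖ ^ 2 * (‖a‖ + ‖b‖) ^ (p - 2)) ≤
      ⟪(‖a‖ ^ (p - 2)) • a - (‖b‖ ^ (p - 2)) • b, a - b⟫ := by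
  rcases le_total ‖b‖ ‖a‖ with h | h
  · exact key_aux hp1 hp2 a b h
  · have h2 := key_aux hp1 hp2 b a h
    have e1 : ⟪(‖b‖ ^ (p - 2)) • b - (‖a‖ ^ (p - 2)) • a, b - a⟫
        = ⟪(‖a‖ ^ (p - 2)) • a - (‖b‖ ^ (p - 2)) • b, a - b⟫ := by
      rw [show (‖b‖ ^ (p - 2)) • b - (‖a‖ ^ (p - 2)) • a
            = -((‖a‖ ^ (p - 2)) • a - (‖b‖ ^ (p - 2)) • b) by abel,
          show b - a = -(a - b) by abel, inner_neg_neg]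
    rw [e1, norm_sub_rev b a, add_comm ‖b‖ ‖a‖] at h2
    exact h2

theorem stmt8 (d : ℕ) (p : ℝ) (hp1 : 1 < p) (hp2 : p ≤ 2)
    (F G : EuclideanSpace ℝ (Fin d) → EuclideanSpace ℝ (Fin d))
    (hF : MemLp F (ENNReal.ofReal p) volume)
    (hG : MemLp G (ENNReal.ofReal p) volume)
    (hFG : 0 < eLpNorm F (ENNReal.ofReal p) volume + eLpNorm G (ENNReal.ofReal p) volume) :
    ENNReal.ofReal (p - 1) * eLpNorm (F - G) (ENNReal.ofReal p) volume ^ (2 : ℝ) /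
        (eLpNorm F (ENNReal.ofReal p) volume + eLpNorm G (ENNReal.ofReal p) volume) ^ (2 - p) ≤
      ∫⁻ x, ENNReal.ofReal
        ⟪(‖F x‖ ^ (p - 2)) • F x - (‖G x‖ ^ (p - 2)) • G x, F x - G x⟫ := by
  have hp0 : (0:ℝ) < p := by linarith
  set pe := ENNReal.ofReal p with hpe
  have hpe0 : pe ≠ 0 := (ENNReal.ofReal_pos.mpr hp0).ne'
  have hpetop : pe ≠ ∞ := ENNReal.ofReal_ne_top
  have hpeR : pe.toReal = p := ENNReal.toReal_ofReal hp0.le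
  have h1pe : (1:ℝ≥0∞) ≤ pe := by
    rw [hpe, ← ENNReal.ofReal_one]; exact ENNReal.ofReal_le_ofReal hp1.le
  have hFm : AEMeasurable F volume := hF.1.aemeasurable
  have hGm : AEMeasurable G volume := hG.1.aemeasurable
  -- Step 1: reduce to the quantity K
  have step1 : ENNReal.ofReal (p - 1) *
      (∫⁻ x, ENNReal.ofReal (‖F x - G x‖ ^ 2 * (‖F x‖ + ‖G x‖) ^ (p - 2))) ≤
      ∫⁻ x, ENNReal.ofReal
        ⟪(‖F x‖ ^ (p - 2)) • F x - (‖G x‖ ^ (p - 2)) • G x, F x - G x⟫ := by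
    rw [← lintegral_const_mul' _ _ ENNReal.ofReal_ne_top]
    refine lintegral_mono fun x => ?_
    rw [← ENNReal.ofReal_mul (by linarith : (0:ℝ) ≤ p - 1)]
    exact ENNReal.ofReal_le_ofReal (key_ineq hp1 hp2 (F x) (G x))
  refine le_trans ?_ step1
  rw [mul_div_assoc]
  refine mul_le_mul_right ?_ _
  set Sg := eLpNorm F pe volume + eLpNorm G pe volume with hSg
  have hSgtop : Sg ≠ ∞ := by
    rw [hSg]
    exact (ENNReal.add_lt_top.mpr ⟨hF.2, hG.2⟩).ne
  rw [ENNReal.div_le_iff ((ENNReal.rpow_pos hFG hSgtop).ne')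
    (ENNReal.rpow_ne_top_of_nonneg (by linarith) hSgtop)]
  -- Now : eLpNorm (F - G) pe volume ^ 2 ≤ K * Sg ^ (2 - p)
  have hN : eLpNorm (F - G) pe volume = (∫⁻ x, ENNReal.ofReal (‖F x - G x‖ ^ p)) ^ (1/p) := by
    rw [eLpNorm_eq_lintegral_rpow_enorm_toReal hpe0 hpetop, hpeR]
    congr 1
    refine lintegral_congr fun x => ?_
    rw [Pi.sub_apply, ← ofReal_norm_eq_enorm,
      ENNReal.ofReal_rpow_of_nonneg (norm_nonneg _) hp0.le]
  have hN2 : eLpNorm (F - G) pe volume ^ (2:ℝ)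
      = (∫⁻ x, ENNReal.ofReal (‖F x - G x‖ ^ p)) ^ (2/p) := by
    rw [hN, ← ENNReal.rpow_mul]
    congr 1
    ring
  have hU : (∫⁻ x, ENNReal.ofReal ((‖F x‖ + ‖G x‖) ^ p)) ^ (1/p) ≤ Sg := by
    have h1 : (∫⁻ x, ENNReal.ofReal ((‖F x‖ + ‖G x‖) ^ p)) ^ (1/p)
        = eLpNorm (fun x => ‖F x‖ + ‖G x‖) pe volume := by
      rw [eLpNorm_eq_lintegral_rpow_enorm_toReal hpe0 hpetop, hpeR]
      congr 1
      refine lintegral_congr fun x => ?_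
      rw [← ofReal_norm_eq_enorm, Real.norm_of_nonneg (by positivity),
        ENNReal.ofReal_rpow_of_nonneg (by positivity) hp0.le]
    rw [h1, hSg]
    calc eLpNorm (fun x => ‖F x‖ + ‖G x‖) pe volume
        = eLpNorm ((fun x => ‖F x‖) + fun x => ‖G x‖) pe volume := rfl
      _ ≤ eLpNorm (fun x => ‖F x‖) pe volume + eLpNorm (fun x => ‖G x‖) pe volume :=
          eLpNorm_add_le hF.1.norm hG.1.norm h1pe
      _ = eLpNorm F pe volume + eLpNorm G pe volume := by rw [eLpNorm_norm, eLpNorm_norm]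
  rcases eq_or_lt_of_le hp2 with hp2e | hplt
  · -- p = 2
    subst hp2e
    have hTK : (∫⁻ x, ENNReal.ofReal (‖F x - G x‖ ^ (2:ℝ)))
        = ∫⁻ x, ENNReal.ofReal (‖F x - G x‖ ^ 2 * (‖F x‖ + ‖G x‖) ^ (0:ℝ)) := by
      refine lintegral_congr fun x => ?_
      rw [Real.rpow_zero, mul_one,
        show (2:ℝ) = ((2:ℕ):ℝ) by norm_num, Real.rpow_natCast]
    rw [hN2, show ((2:ℝ)/2) = 1 by norm_num, ENNReal.rpow_one,
      show ((2:ℝ) - 2) = 0 by norm_num, ENNReal.rpow_zero, mul_one]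
    exact le_of_eq hTK
  · -- p < 2 : Hölder
    have hp0ne : p ≠ 0 := hp0.ne'
    have h2p : (2:ℝ) - p ≠ 0 := by linarith
    have hpq : Real.HolderConjugate (2/p) (2/(2 - p)) := by
      constructor
      · rw [inv_div, inv_div]; ring
      · positivity
      · exact div_pos two_pos (by linarith)
    have hpt : ∀ x : EuclideanSpace ℝ (Fin d), ENNReal.ofReal (‖F x - G x‖ ^ p)
        = (ENNReal.ofReal (‖F x - G x‖ ^ 2 * (‖F x‖ + ‖G x‖) ^ (p - 2))) ^ (p/2)
          * (ENNReal.ofReal ((‖F x‖ + ‖G x‖) ^ p)) ^ ((2 - p)/2) := by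
      intro x
      rcases eq_or_lt_of_le (by positivity : (0:ℝ) ≤ ‖F x‖ + ‖G x‖) with hS | hS
      · have hFx : F x = 0 :=
          norm_eq_zero.mp (by nlinarith [norm_nonneg (F x), norm_nonneg (G x)])
        have hGx : G x = 0 :=
          norm_eq_zero.mp (by nlinarith [norm_nonneg (F x), norm_nonneg (G x)])
        rw [hFx, hGx]
        norm_num [Real.zero_rpow hp0.ne',
          ENNReal.zero_rpow_of_pos (show (0:ℝ) < p/2 by linarith)]
      · have hreal : ‖F x - G x‖ ^ p
            = (‖F x - G x‖ ^ 2 * (‖F x‖ + ‖G x‖) ^ (p - 2)) ^ (p/2)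
              * ((‖F x‖ + ‖G x‖) ^ p) ^ ((2 - p)/2) := by
          rw [Real.mul_rpow (by positivity) (by positivity),
            ← Real.rpow_natCast (‖F x - G x‖) 2, ← Real.rpow_mul (norm_nonneg _),
            ← Real.rpow_mul hS.le, ← Real.rpow_mul hS.le, mul_assoc,
            ← Real.rpow_add hS,
            show ((2:ℕ):ℝ) * (p/2) = p by push_cast; ring,
            show (p - 2) * (p/2) + p * ((2 - p)/2) = 0 by ring,
            Real.rpow_zero, mul_one]
        rw [hreal, ENNReal.ofReal_mul (by positivity),
          ← ENNReal.ofReal_rpow_of_nonneg (by positivity) (by linarith : (0:ℝ) ≤ p/2),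
          ← ENNReal.ofReal_rpow_of_nonneg (by positivity) (by linarith : (0:ℝ) ≤ (2 - p)/2)]
    have holder := ENNReal.lintegral_mul_le_Lp_mul_Lq volume hpq
      (f := fun x => (ENNReal.ofReal (‖F x - G x‖ ^ 2 * (‖F x‖ + ‖G x‖) ^ (p - 2))) ^ (p/2))
      (g := fun x => (ENNReal.ofReal ((‖F x‖ + ‖G x‖) ^ p)) ^ ((2 - p)/2))
      (by fun_prop) (by fun_prop)
    simp only [Pi.mul_apply] at holder
    rw [← lintegral_congr hpt] at holder
    have hsimp1 : ∀ x : EuclideanSpace ℝ (Fin d),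
        ((ENNReal.ofReal (‖F x - G x‖ ^ 2 * (‖F x‖ + ‖G x‖) ^ (p - 2))) ^ (p/2)) ^ (2/p)
        = ENNReal.ofReal (‖F x - G x‖ ^ 2 * (‖F x‖ + ‖G x‖) ^ (p - 2)) := by
      intro x
      rw [← ENNReal.rpow_mul, show (p/2) * (2/p) = 1 by field_simp, ENNReal.rpow_one]
    have hsimp2 : ∀ x : EuclideanSpace ℝ (Fin d),
        ((ENNReal.ofReal ((‖F x‖ + ‖G x‖) ^ p)) ^ ((2 - p)/2)) ^ (2/(2 - p))
        = ENNReal.ofReal ((‖F x‖ + ‖G x‖) ^ p) := by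
      intro x
      rw [← ENNReal.rpow_mul, show ((2 - p)/2) * (2/(2 - p)) = 1 by
        field_simp, ENNReal.rpow_one]
    simp only [hsimp1, hsimp2, one_div_div] at holder
    -- holder : T ≤ K ^ (p/2) * U ^ ((2-p)/2)
    calc eLpNorm (F - G) pe volume ^ (2:ℝ)
        = (∫⁻ x, ENNReal.ofReal (‖F x - G x‖ ^ p)) ^ (2/p) := hN2
      _ ≤ ((∫⁻ x, ENNReal.ofReal (‖F x - G x‖ ^ 2 * (‖F x‖ + ‖G x‖) ^ (p - 2))) ^ (p/2)
            * (∫⁻ x, ENNReal.ofReal ((‖F x‖ + ‖G x‖) ^ p)) ^ ((2 - p)/2)) ^ (2/p) :=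
          ENNReal.rpow_le_rpow holder (by positivity)
      _ = (∫⁻ x, ENNReal.ofReal (‖F x - G x‖ ^ 2 * (‖F x‖ + ‖G x‖) ^ (p - 2)))
            * ((∫⁻ x, ENNReal.ofReal ((‖F x‖ + ‖G x‖) ^ p)) ^ (1/p)) ^ (2 - p) := by
          rw [ENNReal.mul_rpow_of_nonneg _ _ (by positivity : (0:ℝ) ≤ 2/p),
            ← ENNReal.rpow_mul, ← ENNReal.rpow_mul, ← ENNReal.rpow_mul,
            show (p/2) * (2/p) = 1 by field_simp, ENNReal.rpow_one,
            show ((2 - p)/2) * (2/p) = (1/p) * (2 - p) by ring]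
      _ ≤ (∫⁻ x, ENNReal.ofReal (‖F x - G x‖ ^ 2 * (‖F x‖ + ‖G x‖) ^ (p - 2)))
            * Sg ^ (2 - p) :=
          mul_le_mul_right (ENNReal.rpow_le_rpow hU (by linarith)) _
end

section
/- Let (X, μ) be a measure space, let λ₊, λ₋ ∈ L¹(μ) be nonnegative, and let v, w be measurable real-valued functions such that λ₊·(w − v)⁺ and λ₋·(w − v)⁻ are integrable. Then for every ε > 0, 0 ≤ Ψ_v(w) − ∫_X [λ₊·G_ε(w − v) + λ₋·G_ε(v − w)] dμ ≤ (ε/2)·(‖λ₊‖_{L¹(μ)} + ‖λ₋‖_{L¹(μ)}). -/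
open MeasureTheory

/-- The regularization `G_ε` of the positive part function. -/
noncomputable def Geps (ε t : ℝ) : ℝ :=
  if t ≤ 0 then 0 else if t ≤ ε then t ^ 2 / (2 * ε) else t - ε / 2

/-!
Pointwise `t⁺ - ε/2 ≤ G_ε(t) ≤ t⁺`: on `[0, ε]` the gap `t - t²/(2ε)` increases to its value `ε/2`
at `t = ε`, and it is constant beyond. Multiplying by the nonnegative weights `λ±` and integrating
gives both inequalities.
-/

lemma measurable_Geps (ε : ℝ) : Measurable (Geps ε) :=
  Measurable.ite (measurableSet_le measurable_id measurable_const) measurable_const <|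
    Measurable.ite (measurableSet_le measurable_id measurable_const)
      ((measurable_id.pow_const 2).div_const _) (measurable_id.sub measurable_const)

lemma Geps_nonneg (ε t : ℝ) : 0 ≤ Geps ε t := by
  unfold Geps
  split_ifs with h₀ h₁
  · exact le_rfl
  · have : 0 < ε := by linarith
    positivity
  · linarith

lemma Geps_le_max {ε : ℝ} (hε : 0 ≤ ε) (t : ℝ) : Geps ε t ≤ max t 0 := by
  unfold Geps
  split_ifs with h₀ h₁
  · exact le_max_right _ _
  · rw [max_eq_left (by linarith), div_le_iff₀ (by linarith)]
    nlinarith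
  · rw [max_eq_left (by linarith)]
    linarith

lemma max_sub_Geps_le {ε : ℝ} (hε : 0 ≤ ε) (t : ℝ) : max t 0 - Geps ε t ≤ ε / 2 := by
  unfold Geps
  split_ifs with h₀ h₁
  · rw [max_eq_right h₀]
    linarith
  · have hε' : 0 < 2 * ε := by linarith
    rw [max_eq_left (by linarith), sub_le_iff_le_add, ← sub_le_iff_le_add',
      le_div_iff₀ hε']
    nlinarith [sq_nonneg (ε - t)]
  · rw [max_eq_left (by linarith)]
    linarith

section Weighted

variable {X : Type*} [MeasurableSpace X] {μ : Measure X} {l u : X → ℝ} {ε : ℝ}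

lemma MeasureTheory.Integrable.mul_Geps (hint : Integrable (fun x => l x * max (u x) 0) μ)
    (hl : AEStronglyMeasurable l μ) (hl0 : ∀ᵐ x ∂μ, 0 ≤ l x) (hu : AEMeasurable u μ)
    (hε : 0 ≤ ε) : Integrable (fun x => l x * Geps ε (u x)) μ := by
  refine hint.mono (hl.mul ((measurable_Geps ε).comp_aemeasurable hu).aestronglyMeasurable) ?_
  filter_upwards [hl0] with x hx
  simp only [norm_mul, Real.norm_of_nonneg hx, Real.norm_of_nonneg (Geps_nonneg _ _),
    Real.norm_of_nonneg (le_max_right _ _)]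
  exact mul_le_mul_of_nonneg_left (Geps_le_max hε _) hx

lemma integral_mul_max_sub_integral_mul_Geps_mem_Icc (hl : Integrable l μ)
    (hl0 : ∀ᵐ x ∂μ, 0 ≤ l x) (hu : AEMeasurable u μ)
    (hint : Integrable (fun x => l x * max (u x) 0) μ) (hε : 0 ≤ ε) :
    (∫ x, l x * max (u x) 0 ∂μ) - ∫ x, l x * Geps ε (u x) ∂μ ∈
      Set.Icc 0 (ε / 2 * ∫ x, l x ∂μ) := by
  have hG := hint.mul_Geps hl.aestronglyMeasurable hl0 hu hε
  rw [← integral_sub hint hG, ← integral_const_mul]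
  constructor
  · refine integral_nonneg_of_ae ?_
    filter_upwards [hl0] with x hx
    simpa [mul_sub] using mul_le_mul_of_nonneg_left (Geps_le_max hε (u x)) hx
  · refine integral_mono_ae (hint.sub hG) (hl.const_mul _) ?_
    filter_upwards [hl0] with x hx
    have := mul_le_mul_of_nonneg_left (max_sub_Geps_le hε (u x)) hx
    linarith

end Weighted

theorem stmt11 {X : Type*} [MeasurableSpace X] (μ : Measure X)
    (lp lm v w : X → ℝ)
    (hlp : Integrable lp μ) (hlm : Integrable lm μ)
    (hlp0 : ∀ᵐ x ∂μ, 0 ≤ lp x) (hlm0 : ∀ᵐ x ∂μ, 0 ≤ lm x)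
    (hv : Measurable v) (hw : Measurable w)
    (hint1 : Integrable (fun x => lp x * max (w x - v x) 0) μ)
    (hint2 : Integrable (fun x => lm x * max (v x - w x) 0) μ)
    (ε : ℝ) (hε : 0 < ε) :
    0 ≤ (∫ x, (lp x * max (w x - v x) 0 + lm x * max (v x - w x) 0) ∂μ) -
          ∫ x, (lp x * Geps ε (w x - v x) + lm x * Geps ε (v x - w x)) ∂μ ∧
    (∫ x, (lp x * max (w x - v x) 0 + lm x * max (v x - w x) 0) ∂μ) -
          (∫ x, (lp x * Geps ε (w x - v x) + lm x * Geps ε (v x - w x)) ∂μ) ≤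
      (ε / 2) * ((∫ x, |lp x| ∂μ) + (∫ x, |lm x| ∂μ)) := by
  have hwv : AEMeasurable (fun x => w x - v x) μ := (hw.sub hv).aemeasurable
  have hvw : AEMeasurable (fun x => v x - w x) μ := (hv.sub hw).aemeasurable
  obtain ⟨hp₀, hp₁⟩ := integral_mul_max_sub_integral_mul_Geps_mem_Icc hlp hlp0 hwv hint1 hε.le
  obtain ⟨hm₀, hm₁⟩ := integral_mul_max_sub_integral_mul_Geps_mem_Icc hlm hlm0 hvw hint2 hε.le
  have habs_p : ∫ x, |lp x| ∂μ = ∫ x, lp x ∂μ :=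
    integral_congr_ae (hlp0.mono fun x hx => abs_of_nonneg hx)
  have habs_m : ∫ x, |lm x| ∂μ = ∫ x, lm x ∂μ :=
    integral_congr_ae (hlm0.mono fun x hx => abs_of_nonneg hx)
  rw [integral_add hint1 hint2,
    integral_add (hint1.mul_Geps hlp.aestronglyMeasurable hlp0 hwv hε.le)
      (hint2.mul_Geps hlm.aestronglyMeasurable hlm0 hvw hε.le), habs_p, habs_m]
  constructor <;> linarith
end

section
/- Let (X, μ) be a finite measure space, let u_n → u and v_n → v in L¹(μ), let χ_n be measurable functions such that almost everywhere 0 ≤ χ_n ≤ 1, χ_n = 1 on {u_n > v_n} and χ_n = 0 on {u_n < v_n}, and let χ ∈ L^∞(μ) be such that ∫_X χ_n·g dμ → ∫_X χ·g dμ for every g ∈ L¹(μ). Then almost everywhere 0 ≤ χ ≤ 1, χ = 1 on the set {u > v}, and χ = 0 on the set {u < v}. -/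
open MeasureTheory Filter

/-- Auxiliary lemma: the weak limit equals 1 a.e. on `{u₀ > v₀}`. -/
theorem aux14 {X : Type*} [MeasurableSpace X] (μ : Measure X) [IsFiniteMeasure μ]
    (u : ℕ → X → ℝ) (u₀ : X → ℝ) (v : ℕ → X → ℝ) (v₀ : X → ℝ)
    (hu : ∀ n, Integrable (u n) μ) (hu₀ : Integrable u₀ μ)
    (hv : ∀ n, Integrable (v n) μ) (hv₀ : Integrable v₀ μ)
    (huconv : Tendsto (fun n => ∫ x, |u n x - u₀ x| ∂μ) atTop (nhds 0))
    (hvconv : Tendsto (fun n => ∫ x, |v n x - v₀ x| ∂μ) atTop (nhds 0))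
    (χn : ℕ → X → ℝ) (hχnm : ∀ n, AEStronglyMeasurable (χn n) μ)
    (hχn01 : ∀ n, ∀ᵐ x ∂μ, 0 ≤ χn n x ∧ χn n x ≤ 1)
    (hχngt : ∀ n, ∀ᵐ x ∂μ, u n x > v n x → χn n x = 1)
    (χ : X → ℝ) (hχm : AEStronglyMeasurable χ μ)
    (hχ01 : ∀ᵐ x ∂μ, 0 ≤ χ x ∧ χ x ≤ 1)
    (hweak : Tendsto (fun n => ∫ x, χn n x * max (u₀ x - v₀ x) 0 ∂μ) atTop
      (nhds (∫ x, χ x * max (u₀ x - v₀ x) 0 ∂μ))) :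
    ∀ᵐ x ∂μ, u₀ x > v₀ x → χ x = 1 := by
  set p₀ : X → ℝ := fun x => max (u₀ x - v₀ x) 0 with hp₀def
  set p : ℕ → X → ℝ := fun n x => max (u n x - v n x) 0 with hpdef
  have hp₀int : Integrable p₀ μ := (hu₀.sub hv₀).pos_part
  have hpint : ∀ n, Integrable (p n) μ := fun n => ((hu n).sub (hv n)).pos_part
  -- a.e. bounds on 1 - χn
  have hb : ∀ n, ∀ᵐ x ∂μ, ‖1 - χn n x‖ ≤ 1 := by
    intro n
    filter_upwards [hχn01 n] with x hx
    rw [Real.norm_eq_abs, abs_le]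
    constructor <;> nlinarith [hx.1, hx.2]
  -- integrabilities
  have hint1 : ∀ n, Integrable (fun x => (1 - χn n x) * p₀ x) μ := fun n =>
    hp₀int.bdd_mul ((aestronglyMeasurable_const).sub (hχnm n)) (hb n)
  have hint2 : ∀ n, Integrable (fun x => (1 - χn n x) * p n x) μ := fun n =>
    (hpint n).bdd_mul ((aestronglyMeasurable_const).sub (hχnm n)) (hb n)
  -- (1 - χn) * pn = 0 a.e.
  have hzero : ∀ n, ∀ᵐ x ∂μ, (1 - χn n x) * p n x = 0 := by
    intro n
    filter_upwards [hχngt n] with x hx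
    rcases lt_or_ge (v n x) (u n x) with h | h
    · rw [hx h]; ring
    · have : p n x = 0 := max_eq_right (sub_nonpos.2 h)
      rw [this, mul_zero]
  -- pointwise bound on |p₀ - pn|
  have hptwise : ∀ n x, |p₀ x - p n x| ≤ |u n x - u₀ x| + |v n x - v₀ x| := by
    intro n x
    calc |p₀ x - p n x| ≤ |(u₀ x - v₀ x) - (u n x - v n x)| :=
          abs_max_sub_max_le_abs _ _ _
      _ = |(u₀ x - u n x) - (v₀ x - v n x)| := by ring_nf
      _ ≤ |u₀ x - u n x| + |v₀ x - v n x| := abs_sub _ _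
      _ = |u n x - u₀ x| + |v n x - v₀ x| := by rw [abs_sub_comm, abs_sub_comm (v₀ x)]
  -- the key integral bound
  have hkey : ∀ n, ‖∫ x, (1 - χn n x) * p₀ x ∂μ‖ ≤
      (∫ x, |u n x - u₀ x| ∂μ) + ∫ x, |v n x - v₀ x| ∂μ := by
    intro n
    have e1 : ∫ x, (1 - χn n x) * p₀ x ∂μ = ∫ x, (1 - χn n x) * (p₀ x - p n x) ∂μ := by
      have : ∫ x, (1 - χn n x) * p n x ∂μ = 0 := integral_eq_zero_of_ae (hzero n)
      rw [show (fun x => (1 - χn n x) * (p₀ x - p n x)) =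
          fun x => (1 - χn n x) * p₀ x - (1 - χn n x) * p n x by funext x; ring,
        integral_sub (hint1 n) (hint2 n), this, sub_zero]
    rw [e1]
    calc ‖∫ x, (1 - χn n x) * (p₀ x - p n x) ∂μ‖
        ≤ ∫ x, ‖(1 - χn n x) * (p₀ x - p n x)‖ ∂μ := norm_integral_le_integral_norm _
      _ ≤ ∫ x, |u n x - u₀ x| + |v n x - v₀ x| ∂μ := by
          refine integral_mono_ae ?_ ?_ ?_
          · exact ((hp₀int.sub (hpint n)).bdd_mul
              ((aestronglyMeasurable_const).sub (hχnm n)) (hb n)).norm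
          · exact (((hu n).sub hu₀).abs.add (((hv n).sub hv₀).abs))
          filter_upwards [hb n] with x hx
          calc ‖(1 - χn n x) * (p₀ x - p n x)‖
              = ‖1 - χn n x‖ * ‖p₀ x - p n x‖ := norm_mul _ _
            _ ≤ 1 * ‖p₀ x - p n x‖ :=
                mul_le_mul_of_nonneg_right hx (norm_nonneg _)
            _ = |p₀ x - p n x| := by rw [one_mul, Real.norm_eq_abs]
            _ ≤ |u n x - u₀ x| + |v n x - v₀ x| := hptwise n x
      _ = (∫ x, |u n x - u₀ x| ∂μ) + ∫ x, |v n x - v₀ x| ∂μ :=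
          integral_add ((hu n).sub hu₀).abs ((hv n).sub hv₀).abs
  -- the sequence tends to 0
  have ht0 : Tendsto (fun n => ∫ x, (1 - χn n x) * p₀ x ∂μ) atTop (nhds 0) := by
    apply squeeze_zero_norm hkey
    have := huconv.add hvconv
    simpa using this
  -- the sequence also tends to ∫ (1 - χ) p₀
  have ht1 : Tendsto (fun n => ∫ x, (1 - χn n x) * p₀ x ∂μ) atTop
      (nhds (∫ x, (1 - χ x) * p₀ x ∂μ)) := by
    have e : ∀ (f : X → ℝ), AEStronglyMeasurable f μ → (∀ᵐ x ∂μ, ‖f x‖ ≤ 1) →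
        ∫ x, (1 - f x) * p₀ x ∂μ = (∫ x, p₀ x ∂μ) - ∫ x, f x * p₀ x ∂μ := by
      intro f hfm hfb
      rw [show (fun x => (1 - f x) * p₀ x) = fun x => p₀ x - f x * p₀ x by funext x; ring,
        integral_sub hp₀int (hp₀int.bdd_mul hfm hfb)]
    have hχb : ∀ᵐ x ∂μ, ‖χ x‖ ≤ 1 := by
      filter_upwards [hχ01] with x hx
      rw [Real.norm_eq_abs, abs_le]; exact ⟨by linarith [hx.1], hx.2⟩
    have eb : ∀ᵐ x ∂μ, ‖(1:ℝ) - χ x‖ ≤ 1 := by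
      filter_upwards [hχ01] with x hx
      rw [Real.norm_eq_abs, abs_le]; constructor <;> nlinarith [hx.1, hx.2]
    have hχnb : ∀ n, ∀ᵐ x ∂μ, ‖χn n x‖ ≤ 1 := by
      intro n; filter_upwards [hχn01 n] with x hx
      rw [Real.norm_eq_abs, abs_le]; exact ⟨by linarith [hx.1], hx.2⟩
    simp only [fun n => e (χn n) (hχnm n) (hχnb n)]
    rw [e χ hχm hχb]
    exact tendsto_const_nhds.sub hweak
  have hzero' : ∫ x, (1 - χ x) * p₀ x ∂μ = 0 := tendsto_nhds_unique ht1 ht0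
  have hnn : 0 ≤ᵐ[μ] fun x => (1 - χ x) * p₀ x := by
    filter_upwards [hχ01] with x hx
    exact mul_nonneg (by linarith [hx.2]) (le_max_right _ _)
  have hintχ : Integrable (fun x => (1 - χ x) * p₀ x) μ := by
    have hbb : ∀ᵐ x ∂μ, ‖(1:ℝ) - χ x‖ ≤ 1 := by
      filter_upwards [hχ01] with x hx
      rw [Real.norm_eq_abs, abs_le]; constructor <;> nlinarith [hx.1, hx.2]
    exact hp₀int.bdd_mul ((aestronglyMeasurable_const).sub hχm) hbb
  have hae : (fun x => (1 - χ x) * p₀ x) =ᵐ[μ] 0 :=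
    (integral_eq_zero_iff_of_nonneg_ae hnn hintχ).1 hzero'
  filter_upwards [hae] with x hx hgt
  have hp : p₀ x = u₀ x - v₀ x := max_eq_left (by linarith)
  have hp' : p₀ x > 0 := by rw [hp]; linarith
  have : (1 - χ x) * p₀ x = 0 := hx
  have : 1 - χ x = 0 := by
    rcases mul_eq_zero.1 this with h | h
    · exact h
    · exact absurd h (ne_of_gt hp')
  linarith

theorem stmt14 {X : Type*} [MeasurableSpace X] (μ : Measure X) [IsFiniteMeasure μ]
    (u : ℕ → X → ℝ) (u₀ : X → ℝ) (v : ℕ → X → ℝ) (v₀ : X → ℝ)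
    (hu : ∀ n, Integrable (u n) μ) (hu₀ : Integrable u₀ μ)
    (hv : ∀ n, Integrable (v n) μ) (hv₀ : Integrable v₀ μ)
    (huconv : Tendsto (fun n => ∫ x, |u n x - u₀ x| ∂μ) atTop (nhds 0))
    (hvconv : Tendsto (fun n => ∫ x, |v n x - v₀ x| ∂μ) atTop (nhds 0))
    (χn : ℕ → X → ℝ) (hχnm : ∀ n, Measurable (χn n))
    (hχn01 : ∀ n, ∀ᵐ x ∂μ, 0 ≤ χn n x ∧ χn n x ≤ 1)
    (hχngt : ∀ n, ∀ᵐ x ∂μ, u n x > v n x → χn n x = 1)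
    (hχnlt : ∀ n, ∀ᵐ x ∂μ, u n x < v n x → χn n x = 0)
    (χ : X → ℝ) (hχ : MemLp χ ⊤ μ)
    (hweak : ∀ g : X → ℝ, Integrable g μ →
      Tendsto (fun n => ∫ x, χn n x * g x ∂μ) atTop (nhds (∫ x, χ x * g x ∂μ))) :
    (∀ᵐ x ∂μ, 0 ≤ χ x ∧ χ x ≤ 1) ∧
    (∀ᵐ x ∂μ, u₀ x > v₀ x → χ x = 1) ∧
    (∀ᵐ x ∂μ, u₀ x < v₀ x → χ x = 0) := by
  have hχm : AEStronglyMeasurable χ μ := hχ.aestronglyMeasurable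
  have hχint : Integrable χ μ := hχ.integrable le_top
  -- a helper to rewrite integrals against indicators
  have e : ∀ (s : Set X), MeasurableSet s → ∀ (f : X → ℝ),
      ∫ x, f x * s.indicator (fun _ => (1:ℝ)) x ∂μ = ∫ x in s, f x ∂μ := by
    intro s hs f
    rw [← integral_indicator hs]
    congr 1; funext x
    by_cases hx : x ∈ s <;> simp [hx]
  -- Part 1: 0 ≤ χ ≤ 1 a.e.
  have h1a : 0 ≤ᵐ[μ] χ := by
    apply ae_nonneg_of_forall_setIntegral_nonneg hχint
    intro s hs _
    have hg : Integrable (s.indicator (fun _ => (1:ℝ))) μ := (integrable_const 1).indicator hs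
    have h := hweak _ hg
    rw [e s hs χ] at h
    simp only [e s hs] at h
    refine ge_of_tendsto' h fun n => ?_
    refine setIntegral_nonneg_of_ae ?_
    filter_upwards [hχn01 n] with x hx using hx.1
  have h1b : χ ≤ᵐ[μ] fun _ => 1 := by
    have key : 0 ≤ᵐ[μ] fun x => 1 - χ x := by
      apply ae_nonneg_of_forall_setIntegral_nonneg ((integrable_const 1).sub hχint)
      intro s hs hsμ
      have hg : Integrable (s.indicator (fun _ => (1:ℝ))) μ := (integrable_const 1).indicator hs
      have h := hweak _ hg
      rw [e s hs χ] at h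
      simp only [e s hs] at h
      have hle : ∫ x in s, χ x ∂μ ≤ (μ s).toReal := by
        refine le_of_tendsto' h fun n => ?_
        have hχnint : Integrable (χn n) μ :=
          Integrable.mono' (integrable_const 1) (hχnm n).aestronglyMeasurable
            (by filter_upwards [hχn01 n] with x hx
                rw [Real.norm_eq_abs, abs_le]; exact ⟨by linarith [hx.1], hx.2⟩)
        calc ∫ x in s, χn n x ∂μ ≤ ∫ _ in s, (1:ℝ) ∂μ := by
              refine integral_mono_ae hχnint.integrableOn (integrable_const 1) ?_
              exact ae_restrict_of_ae
                (by filter_upwards [hχn01 n] with x hx; exact hx.2)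
          _ = (μ s).toReal := by simp [measureReal_def]
      have : ∫ x in s, (1 - χ x) ∂μ = (μ s).toReal - ∫ x in s, χ x ∂μ := by
        rw [integral_sub (integrable_const 1).integrableOn hχint.integrableOn]
        simp [measureReal_def]
      simp only [Pi.sub_apply]
      rw [this]; linarith
    filter_upwards [key] with x hx
    have : (0:ℝ) ≤ 1 - χ x := hx
    show χ x ≤ 1
    linarith
  have h1 : ∀ᵐ x ∂μ, 0 ≤ χ x ∧ χ x ≤ 1 := by
    filter_upwards [h1a, h1b] with x hx hx' using ⟨hx, hx'⟩
  refine ⟨h1, ?_, ?_⟩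
  · exact aux14 μ u u₀ v v₀ hu hu₀ hv hv₀ huconv hvconv χn
      (fun n => (hχnm n).aestronglyMeasurable) hχn01 hχngt χ hχm h1
      (hweak _ (hu₀.sub hv₀).pos_part)
  · -- apply aux with roles swapped and χ replaced by 1 - χ
    have := aux14 μ v v₀ u u₀ hv hv₀ hu hu₀ hvconv huconv (fun n x => 1 - χn n x)
      (fun n => aestronglyMeasurable_const.sub (hχnm n).aestronglyMeasurable)
      (fun n => by filter_upwards [hχn01 n] with x hx; constructor <;> linarith [hx.1, hx.2])
      (fun n => by filter_upwards [hχnlt n] with x hx hlt; rw [hx hlt]; ring)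
      (fun x => 1 - χ x) (aestronglyMeasurable_const.sub hχm)
      (by filter_upwards [h1] with x hx; constructor <;> linarith [hx.1, hx.2]) ?_
    · filter_upwards [this] with x hx hlt
      have := hx hlt; linarith
    · -- weak convergence for 1 - χn
      set g : X → ℝ := fun x => max (v₀ x - u₀ x) 0 with hgdef
      have hgint : Integrable g μ := (hv₀.sub hu₀).pos_part
      have e2 : ∀ (f : X → ℝ), AEStronglyMeasurable f μ → (∀ᵐ x ∂μ, ‖f x‖ ≤ 1) →
          ∫ x, (1 - f x) * g x ∂μ = (∫ x, g x ∂μ) - ∫ x, f x * g x ∂μ := by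
        intro f hfm hfb
        rw [show (fun x => (1 - f x) * g x) = fun x => g x - f x * g x by funext x; ring,
          integral_sub hgint (hgint.bdd_mul hfm hfb)]
      have hχnb : ∀ n, ∀ᵐ x ∂μ, ‖χn n x‖ ≤ 1 := by
        intro n; filter_upwards [hχn01 n] with x hx
        rw [Real.norm_eq_abs, abs_le]; exact ⟨by linarith [hx.1], hx.2⟩
      have hχb : ∀ᵐ x ∂μ, ‖χ x‖ ≤ 1 := by
        filter_upwards [h1] with x hx
        rw [Real.norm_eq_abs, abs_le]; exact ⟨by linarith [hx.1], hx.2⟩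
      show Tendsto (fun n => ∫ x, (1 - χn n x) * g x ∂μ) atTop (nhds (∫ x, (1 - χ x) * g x ∂μ))
      simp only [fun n => e2 (χn n) (hχnm n).aestronglyMeasurable (hχnb n)]
      rw [e2 χ hχm hχb]
      exact tendsto_const_nhds.sub (hweak _ hgint)
end

section
/- Let (X, μ) be a measure space, 1 < p < ∞, p′ = p/(p−1). Let λ_n^+, λ_n^− ∈ L^{p′}(μ) be nonnegative with λ_n^+ → λ^+ and λ_n^− → λ^− in L^{p′}(μ), let v_n → v and u_n → u in L^p(μ), and let ζ_n ∈ L^{p′}(μ) converge weakly to ζ, i.e. ∫ ζ_n h dμ → ∫ ζ h dμ for every h ∈ L^p(μ). Write Ψ_n(w) = ∫_X [λ_n^+·(w − v_n)⁺ + λ_n^−·(w − v_n)⁻] dμ and Ψ(w) = ∫_X [λ^+·(w − v)⁺ + λ^−·(w − v)⁻] dμ. If for every n and every w ∈ L^p(μ) one has Ψ_n(w) − Ψ_n(u_n) ≥ ∫_X ζ_n·(w − u_n) dμ, then for every w ∈ L^p(μ) one has Ψ(w) − Ψ(u) ≥ ∫_X ζ·(w − u) dμ. -/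
open MeasureTheory Filter

/-- The two-phase functional `Ψ_v(w) = ∫ [λ₊ (w-v)⁺ + λ₋ (w-v)⁻]`. -/
noncomputable def Psi {X : Type*} [MeasurableSpace X] (μ : Measure X)
    (lp lm v w : X → ℝ) : ℝ :=
  ∫ x, (lp x * max (w x - v x) 0 + lm x * max (v x - w x) 0) ∂μ

open ENNReal

section aux
variable {X : Type*} [MeasurableSpace X] {μ : Measure X} {P Q : ℝ≥0∞}

lemma aux_holder (hQP : (1:ℝ≥0∞)/1 = 1/Q + 1/P) {f g : X → ℝ}
    (hf : MemLp f Q μ) (hg : MemLp g P μ) :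
    Integrable (fun x => f x * g x) μ ∧
    |∫ x, f x * g x ∂μ| ≤ (eLpNorm f Q μ).toReal * (eLpNorm g P μ).toReal := by
  have h3 : eLpNorm (fun x => f x * g x) 1 μ ≤ eLpNorm f Q μ * eLpNorm g P μ := by
    have hT : ENNReal.HolderTriple Q P 1 := ⟨by rw [one_div, one_div, one_div] at hQP; exact hQP.symm⟩
    have := eLpNorm_le_eLpNorm_mul_eLpNorm_of_nnnorm (p := Q) (q := P) (r := 1) hf.1 hg.1 (· * ·) 1
      (Eventually.of_forall fun x => by simp [nnnorm_mul])
    simpa using this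
  have hsm : MemLp (fun x => f x * g x) 1 μ :=
    ⟨hf.1.mul hg.1, lt_of_le_of_lt h3
      (ENNReal.mul_lt_top hf.eLpNorm_lt_top hg.eLpNorm_lt_top)⟩
  have hint : Integrable (fun x => f x * g x) μ := memLp_one_iff_integrable.mp hsm
  refine ⟨hint, ?_⟩
  have h1 : |∫ x, f x * g x ∂μ| ≤ ∫ x, ‖f x * g x‖ ∂μ := by
    rw [← Real.norm_eq_abs]; exact norm_integral_le_integral_norm _
  have h2 : ∫ x, ‖f x * g x‖ ∂μ = (eLpNorm (fun x => f x * g x) 1 μ).toReal := by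
    rw [integral_norm_eq_lintegral_enorm hint.1, eLpNorm_one_eq_lintegral_enorm]
  have h4 := ENNReal.toReal_mono
    (ENNReal.mul_ne_top hf.eLpNorm_ne_top hg.eLpNorm_ne_top) h3
  rw [ENNReal.toReal_mul] at h4
  linarith
end aux

section aux2
variable {X : Type*} [MeasurableSpace X] {μ : Measure X} {P Q : ℝ≥0∞}

lemma aux_tri (hP : 1 ≤ P) {f g : X → ℝ} (hf : MemLp f P μ) (hg : MemLp g P μ) :
    (eLpNorm f P μ).toReal ≤
      (eLpNorm (fun x => f x - g x) P μ).toReal + (eLpNorm g P μ).toReal := by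
  have h1 : eLpNorm f P μ ≤ eLpNorm (fun x => f x - g x) P μ + eLpNorm g P μ := by
    have := eLpNorm_add_le (hf.sub hg).1 hg.1 hP
    have he : f = fun x => (f x - g x) + g x := by funext x; ring
    calc eLpNorm f P μ = eLpNorm (fun x => (f x - g x) + g x) P μ := by rw [← he]
      _ ≤ _ := this
  have h2 := ENNReal.toReal_mono
    (ENNReal.add_ne_top.mpr ⟨(hf.sub hg).eLpNorm_ne_top, hg.eLpNorm_ne_top⟩) h1
  rwa [ENNReal.toReal_add (hf.sub hg).eLpNorm_ne_top hg.eLpNorm_ne_top] at h2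

lemma aux_diff (hQP : (1:ℝ≥0∞)/1 = 1/Q + 1/P) {f f' g g' : X → ℝ}
    (hf : MemLp f Q μ) (hf' : MemLp f' Q μ) (hg : MemLp g P μ) (hg' : MemLp g' P μ) :
    |∫ x, f x * g x ∂μ - ∫ x, f' x * g' x ∂μ| ≤
      (eLpNorm (fun x => f x - f' x) Q μ).toReal * (eLpNorm g P μ).toReal +
      (eLpNorm f' Q μ).toReal * (eLpNorm (fun x => g x - g' x) P μ).toReal := by
  obtain ⟨hi1, hb1⟩ := aux_holder hQP (hf.sub hf') hg
  obtain ⟨hi2, hb2⟩ := aux_holder hQP hf' (hg.sub hg')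
  simp only [Pi.sub_apply] at hi1 hb1 hi2 hb2
  have hi3 := (aux_holder hQP hf hg).1
  have hi4 := (aux_holder hQP hf' hg').1
  have key : ∫ x, f x * g x ∂μ - ∫ x, f' x * g' x ∂μ =
      (∫ x, (f x - f' x) * g x ∂μ) + ∫ x, f' x * (g x - g' x) ∂μ := by
    rw [← integral_add hi1 hi2, ← integral_sub hi3 hi4]
    congr 1; funext x; ring
  rw [key]
  calc |(∫ x, (f x - f' x) * g x ∂μ) + ∫ x, f' x * (g x - g' x) ∂μ|
      ≤ |∫ x, (f x - f' x) * g x ∂μ| + |∫ x, f' x * (g x - g' x) ∂μ| := abs_add_le _ _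
    _ ≤ _ := add_le_add hb1 hb2

end aux2

section aux3
variable {X : Type*} [MeasurableSpace X] {μ : Measure X} {P Q : ℝ≥0∞}

lemma aux_conv (hQP : (1:ℝ≥0∞)/1 = 1/Q + 1/P) (hP : 1 ≤ P)
    {fn : ℕ → X → ℝ} {f : X → ℝ} {gn : ℕ → X → ℝ} {g : X → ℝ}
    (hfn : ∀ n, MemLp (fn n) Q μ) (hf : MemLp f Q μ)
    (hgn : ∀ n, MemLp (gn n) P μ) (hg : MemLp g P μ)
    (hfc : Tendsto (fun n => (eLpNorm (fun x => fn n x - f x) Q μ).toReal) atTop (nhds 0))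
    (hgc : Tendsto (fun n => (eLpNorm (fun x => gn n x - g x) P μ).toReal) atTop (nhds 0)) :
    Tendsto (fun n => ∫ x, fn n x * gn n x ∂μ) atTop (nhds (∫ x, f x * g x ∂μ)) := by
  rw [tendsto_iff_norm_sub_tendsto_zero]
  have key : ∀ n, ‖(∫ x, fn n x * gn n x ∂μ) - ∫ x, f x * g x ∂μ‖ ≤
      (eLpNorm (fun x => fn n x - f x) Q μ).toReal *
        ((eLpNorm (fun x => gn n x - g x) P μ).toReal + (eLpNorm g P μ).toReal) +
      (eLpNorm f Q μ).toReal * (eLpNorm (fun x => gn n x - g x) P μ).toReal := by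
    intro n
    rw [Real.norm_eq_abs]
    refine le_trans (aux_diff hQP (hfn n) hf (hgn n) hg) ?_
    gcongr
    exact aux_tri hP (hgn n) hg
  have hlim : Tendsto (fun n =>
      (eLpNorm (fun x => fn n x - f x) Q μ).toReal *
        ((eLpNorm (fun x => gn n x - g x) P μ).toReal + (eLpNorm g P μ).toReal) +
      (eLpNorm f Q μ).toReal * (eLpNorm (fun x => gn n x - g x) P μ).toReal)
      atTop (nhds 0) := by
    have := (hfc.mul (hgc.add (tendsto_const_nhds (x := (eLpNorm g P μ).toReal)))).add
      ((tendsto_const_nhds (x := (eLpNorm f Q μ).toReal)).mul hgc)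
    simpa using this
  exact squeeze_zero (fun n => norm_nonneg _) key hlim

end aux3


section aux4
variable {X : Type*} [MeasurableSpace X] {μ : Measure X} {P Q : ℝ≥0∞}

lemma aux_np_pos_le {a b : X → ℝ} :
    eLpNorm (fun x => max (a x) 0 - max (b x) 0) P μ ≤ eLpNorm (fun x => a x - b x) P μ := by
  refine eLpNorm_mono fun x => ?_
  simp only [Real.norm_eq_abs]
  exact abs_max_sub_max_le_abs _ _ _

lemma psi_split (hQP : (1:ℝ≥0∞)/1 = 1/Q + 1/P) {l1 l2 v0 w : X → ℝ}
    (hl1 : MemLp l1 Q μ) (hl2 : MemLp l2 Q μ) (hv0 : MemLp v0 P μ) (hw : MemLp w P μ) :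
    Psi μ l1 l2 v0 w = (∫ x, l1 x * max (w x - v0 x) 0 ∂μ) +
      ∫ x, l2 x * max (v0 x - w x) 0 ∂μ := by
  have hA : MemLp (fun x => max (w x - v0 x) 0) P μ := (hw.sub hv0).pos_part
  have hB : MemLp (fun x => max (v0 x - w x) 0) P μ := (hv0.sub hw).pos_part
  exact integral_add (aux_holder hQP hl1 hA).1 (aux_holder hQP hl2 hB).1

lemma psi_lip (hQP : (1:ℝ≥0∞)/1 = 1/Q + 1/P) {l1 l2 v0 w1 w2 : X → ℝ}
    (hl1 : MemLp l1 Q μ) (hl2 : MemLp l2 Q μ) (hv0 : MemLp v0 P μ)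
    (hw1 : MemLp w1 P μ) (hw2 : MemLp w2 P μ) :
    Psi μ l1 l2 v0 w1 - Psi μ l1 l2 v0 w2 ≤
      ((eLpNorm l1 Q μ).toReal + (eLpNorm l2 Q μ).toReal) *
        (eLpNorm (fun x => w1 x - w2 x) P μ).toReal := by
  have hA1 : MemLp (fun x => max (w1 x - v0 x) 0) P μ := (hw1.sub hv0).pos_part
  have hA2 : MemLp (fun x => max (w2 x - v0 x) 0) P μ := (hw2.sub hv0).pos_part
  have hB1 : MemLp (fun x => max (v0 x - w1 x) 0) P μ := (hv0.sub hw1).pos_part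
  have hB2 : MemLp (fun x => max (v0 x - w2 x) 0) P μ := (hv0.sub hw2).pos_part
  have hnp : (eLpNorm (fun x => max (w1 x - v0 x) 0 - max (w2 x - v0 x) 0) P μ).toReal ≤
      (eLpNorm (fun x => w1 x - w2 x) P μ).toReal := by
    refine ENNReal.toReal_mono (hw1.sub hw2).eLpNorm_ne_top ?_
    refine le_trans aux_np_pos_le (le_of_eq ?_)
    congr 1; funext x; ring
  have hnm : (eLpNorm (fun x => max (v0 x - w1 x) 0 - max (v0 x - w2 x) 0) P μ).toReal ≤
      (eLpNorm (fun x => w1 x - w2 x) P μ).toReal := by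
    refine ENNReal.toReal_mono (hw1.sub hw2).eLpNorm_ne_top ?_
    refine le_trans aux_np_pos_le ?_
    have h1 : (fun x => (v0 x - w1 x) - (v0 x - w2 x)) = fun x => -(w1 x - w2 x) := by
      funext x; ring
    rw [h1]
    exact le_of_eq (eLpNorm_neg (f := fun x => w1 x - w2 x) (p := P) (μ := μ))
  have d1 : (∫ x, l1 x * max (w1 x - v0 x) 0 ∂μ) - ∫ x, l1 x * max (w2 x - v0 x) 0 ∂μ ≤
      (eLpNorm l1 Q μ).toReal * (eLpNorm (fun x => w1 x - w2 x) P μ).toReal := by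
    have h := (aux_holder hQP hl1 (hA1.sub hA2))
    simp only [Pi.sub_apply] at h
    have he : (∫ x, l1 x * max (w1 x - v0 x) 0 ∂μ) - ∫ x, l1 x * max (w2 x - v0 x) 0 ∂μ =
        ∫ x, l1 x * (max (w1 x - v0 x) 0 - max (w2 x - v0 x) 0) ∂μ := by
      rw [← integral_sub (aux_holder hQP hl1 hA1).1 (aux_holder hQP hl1 hA2).1]
      congr 1; funext x; ring
    rw [he]
    refine le_trans (le_abs_self _) (le_trans h.2 ?_)
    exact mul_le_mul_of_nonneg_left hnp ENNReal.toReal_nonneg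
  have d2 : (∫ x, l2 x * max (v0 x - w1 x) 0 ∂μ) - ∫ x, l2 x * max (v0 x - w2 x) 0 ∂μ ≤
      (eLpNorm l2 Q μ).toReal * (eLpNorm (fun x => w1 x - w2 x) P μ).toReal := by
    have h := (aux_holder hQP hl2 (hB1.sub hB2))
    simp only [Pi.sub_apply] at h
    have he : (∫ x, l2 x * max (v0 x - w1 x) 0 ∂μ) - ∫ x, l2 x * max (v0 x - w2 x) 0 ∂μ =
        ∫ x, l2 x * (max (v0 x - w1 x) 0 - max (v0 x - w2 x) 0) ∂μ := by
      rw [← integral_sub (aux_holder hQP hl2 hB1).1 (aux_holder hQP hl2 hB2).1]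
      congr 1; funext x; ring
    rw [he]
    refine le_trans (le_abs_self _) (le_trans h.2 ?_)
    exact mul_le_mul_of_nonneg_left hnm ENNReal.toReal_nonneg
  rw [psi_split hQP hl1 hl2 hv0 hw1, psi_split hQP hl1 hl2 hv0 hw2]
  nlinarith [d1, d2]

end aux4

section aux5
variable {X : Type*} [MeasurableSpace X] {μ : Measure X} {P Q : ℝ≥0∞}

lemma aux_pos_conv (hP : 1 ≤ P) {an bn : ℕ → X → ℝ} {a b : X → ℝ}
    (han : ∀ n, MemLp (an n) P μ) (ha : MemLp a P μ)
    (hbn : ∀ n, MemLp (bn n) P μ) (hb : MemLp b P μ)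
    (hac : Tendsto (fun n => (eLpNorm (fun x => an n x - a x) P μ).toReal) atTop (nhds 0))
    (hbc : Tendsto (fun n => (eLpNorm (fun x => bn n x - b x) P μ).toReal) atTop (nhds 0)) :
    Tendsto (fun n => (eLpNorm
      (fun x => max (an n x - bn n x) 0 - max (a x - b x) 0) P μ).toReal) atTop (nhds 0) := by
  refine squeeze_zero (fun n => ENNReal.toReal_nonneg) (fun n => ?_) (by simpa using hac.add hbc)
  have h1 : eLpNorm (fun x => max (an n x - bn n x) 0 - max (a x - b x) 0) P μ ≤
      eLpNorm (fun x => (an n x - a x) - (bn n x - b x)) P μ := by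
    refine le_trans aux_np_pos_le (le_of_eq ?_)
    congr 1; funext x; ring
  have h2 : eLpNorm (fun x => (an n x - a x) - (bn n x - b x)) P μ ≤
      eLpNorm (fun x => an n x - a x) P μ + eLpNorm (fun x => bn n x - b x) P μ :=
    eLpNorm_sub_le ((han n).sub ha).1 ((hbn n).sub hb).1 hP
  have h3 := ENNReal.toReal_mono (ENNReal.add_ne_top.mpr
    ⟨((han n).sub ha).eLpNorm_ne_top, ((hbn n).sub hb).eLpNorm_ne_top⟩) (h1.trans h2)
  rwa [ENNReal.toReal_add ((han n).sub ha).eLpNorm_ne_top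
    ((hbn n).sub hb).eLpNorm_ne_top] at h3

lemma psi_tendsto (hQP : (1:ℝ≥0∞)/1 = 1/Q + 1/P) (hP : 1 ≤ P)
    {lpn lmn : ℕ → X → ℝ} {lp lm : X → ℝ} {vn wn : ℕ → X → ℝ} {v w : X → ℝ}
    (hlpn : ∀ n, MemLp (lpn n) Q μ) (hlmn : ∀ n, MemLp (lmn n) Q μ)
    (hlp : MemLp lp Q μ) (hlm : MemLp lm Q μ)
    (hvn : ∀ n, MemLp (vn n) P μ) (hv : MemLp v P μ)
    (hwn : ∀ n, MemLp (wn n) P μ) (hw : MemLp w P μ)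
    (hlpc : Tendsto (fun n => (eLpNorm (fun x => lpn n x - lp x) Q μ).toReal) atTop (nhds 0))
    (hlmc : Tendsto (fun n => (eLpNorm (fun x => lmn n x - lm x) Q μ).toReal) atTop (nhds 0))
    (hvc : Tendsto (fun n => (eLpNorm (fun x => vn n x - v x) P μ).toReal) atTop (nhds 0))
    (hwc : Tendsto (fun n => (eLpNorm (fun x => wn n x - w x) P μ).toReal) atTop (nhds 0)) :
    Tendsto (fun n => Psi μ (lpn n) (lmn n) (vn n) (wn n)) atTop
      (nhds (Psi μ lp lm v w)) := by
  have hAn : ∀ n, MemLp (fun x => max (wn n x - vn n x) 0) P μ :=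
    fun n => ((hwn n).sub (hvn n)).pos_part
  have hA : MemLp (fun x => max (w x - v x) 0) P μ := (hw.sub hv).pos_part
  have hBn : ∀ n, MemLp (fun x => max (vn n x - wn n x) 0) P μ :=
    fun n => ((hvn n).sub (hwn n)).pos_part
  have hB : MemLp (fun x => max (v x - w x) 0) P μ := (hv.sub hw).pos_part
  have hposA := aux_pos_conv hP hwn hw hvn hv hwc hvc
  have hposB := aux_pos_conv hP hvn hv hwn hw hvc hwc
  have t1 := aux_conv hQP hP hlpn hlp hAn hA hlpc hposA
  have t2 := aux_conv hQP hP hlmn hlm hBn hB hlmc hposB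
  have e : ∀ n, Psi μ (lpn n) (lmn n) (vn n) (wn n) =
      (∫ x, lpn n x * max (wn n x - vn n x) 0 ∂μ) +
        ∫ x, lmn n x * max (vn n x - wn n x) 0 ∂μ :=
    fun n => psi_split hQP (hlpn n) (hlmn n) (hvn n) (hwn n)
  rw [show Psi μ lp lm v w = _ from psi_split hQP hlp hlm hv hw]
  exact (t1.add t2).congr fun n => (e n).symm

end aux5

theorem stmt16 {X : Type*} [MeasurableSpace X] (μ : Measure X)
    (p p' : ℝ) (hp : 1 < p) (hp' : p' = p / (p - 1))
    (lpn lmn : ℕ → X → ℝ) (lp lm : X → ℝ)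
    (hlpn : ∀ n, MemLp (lpn n) (ENNReal.ofReal p') μ)
    (hlmn : ∀ n, MemLp (lmn n) (ENNReal.ofReal p') μ)
    (hlpn0 : ∀ n, ∀ᵐ x ∂μ, 0 ≤ lpn n x) (hlmn0 : ∀ n, ∀ᵐ x ∂μ, 0 ≤ lmn n x)
    (hlp : MemLp lp (ENNReal.ofReal p') μ) (hlm : MemLp lm (ENNReal.ofReal p') μ)
    (hlpc : Tendsto (fun n => eLpNorm (fun x => lpn n x - lp x) (ENNReal.ofReal p') μ)
      atTop (nhds 0))
    (hlmc : Tendsto (fun n => eLpNorm (fun x => lmn n x - lm x) (ENNReal.ofReal p') μ)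
      atTop (nhds 0))
    (vn un : ℕ → X → ℝ) (v u : X → ℝ)
    (hvn : ∀ n, MemLp (vn n) (ENNReal.ofReal p) μ)
    (hun : ∀ n, MemLp (un n) (ENNReal.ofReal p) μ)
    (hv : MemLp v (ENNReal.ofReal p) μ) (hu : MemLp u (ENNReal.ofReal p) μ)
    (hvc : Tendsto (fun n => eLpNorm (fun x => vn n x - v x) (ENNReal.ofReal p) μ)
      atTop (nhds 0))
    (huc : Tendsto (fun n => eLpNorm (fun x => un n x - u x) (ENNReal.ofReal p) μ)
      atTop (nhds 0))
    (ζn : ℕ → X → ℝ) (ζ : X → ℝ)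
    (hζn : ∀ n, MemLp (ζn n) (ENNReal.ofReal p') μ) (hζ : MemLp ζ (ENNReal.ofReal p') μ)
    (hζweak : ∀ h : X → ℝ, MemLp h (ENNReal.ofReal p) μ →
      Tendsto (fun n => ∫ x, ζn n x * h x ∂μ) atTop (nhds (∫ x, ζ x * h x ∂μ)))
    (hsub : ∀ n, ∀ w : X → ℝ, MemLp w (ENNReal.ofReal p) μ →
      Psi μ (lpn n) (lmn n) (vn n) w - Psi μ (lpn n) (lmn n) (vn n) (un n) ≥
        ∫ x, ζn n x * (w x - un n x) ∂μ) :
    ∀ w : X → ℝ, MemLp w (ENNReal.ofReal p) μ →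
      Psi μ lp lm v w - Psi μ lp lm v u ≥ ∫ x, ζ x * (w x - u x) ∂μ := by
  intro w hw
  set P := ENNReal.ofReal p with hPdef
  set Q := ENNReal.ofReal p' with hQdef
  have hpq : p.HolderConjugate p' := (Real.holderConjugate_iff_eq_conjExponent hp).mpr hp'
  have hQP : (1:ℝ≥0∞)/1 = 1/Q + 1/P := by
    simp only [one_div, hPdef, hQdef]
    rw [hpq.symm.inv_add_inv_ennreal, inv_one]
  have hP : 1 ≤ P := ENNReal.one_le_ofReal.mpr hp.le
  have hQ : 1 ≤ Q := ENNReal.one_le_ofReal.mpr hpq.symm.lt.le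
  -- real-valued norm convergences
  have toR : ∀ {s : ℕ → ℝ≥0∞}, Tendsto s atTop (nhds 0) →
      Tendsto (fun n => (s n).toReal) atTop (nhds 0) := by
    intro s h
    have := (ENNReal.tendsto_toReal (by simp)).comp h
    simp only [ENNReal.toReal_zero] at this
    exact this
  have hlpc' := toR hlpc
  have hlmc' := toR hlmc
  have hvc' := toR hvc
  have huc' := toR huc
  have hwc0 : Tendsto (fun n : ℕ => (eLpNorm (fun x => w x - w x) P μ).toReal)
      atTop (nhds 0) := by
    simp only [sub_self]
    simpa [eLpNorm_zero] using tendsto_const_nhds (α := ℝ) (f := atTop (α := ℕ))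
  have T1 : Tendsto (fun n => Psi μ (lpn n) (lmn n) (vn n) w) atTop
      (nhds (Psi μ lp lm v w)) :=
    psi_tendsto hQP hP hlpn hlmn hlp hlm hvn hv (fun _ => hw) hw hlpc' hlmc' hvc' hwc0
  have T2 : Tendsto (fun n => Psi μ (lpn n) (lmn n) (vn n) (un n)) atTop
      (nhds (Psi μ lp lm v u)) :=
    psi_tendsto hQP hP hlpn hlmn hlp hlm hvn hv hun hu hlpc' hlmc' hvc' huc'
  -- the weak-convergence piece
  have negnorm : ∀ (f : X → ℝ), eLpNorm (fun x => -(f x)) P μ = eLpNorm f P μ :=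
    fun f => eLpNorm_neg f P μ
  have hGn' : Tendsto (fun n => (eLpNorm (fun x => u x - un n x) P μ).toReal)
      atTop (nhds 0) := by
    have he : (fun n => (eLpNorm (fun x => u x - un n x) P μ).toReal) =
        fun n => (eLpNorm (fun x => un n x - u x) P μ).toReal := by
      funext n
      congr 1
      rw [show (fun x => u x - un n x) = fun x => -(un n x - u x) by funext x; ring]
      exact negnorm _
    rw [he]; exact huc'
  have key : ∀ n, |∫ x, ζn n x * (u x - un n x) ∂μ| ≤
      ((eLpNorm (lpn n) Q μ).toReal + (eLpNorm (lmn n) Q μ).toReal) *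
        (eLpNorm (fun x => u x - un n x) P μ).toReal := by
    intro n
    rw [abs_le]
    constructor
    · -- lower bound, from w' = un + (un - u)
      have hw' : MemLp (fun x => un n x + (un n x - u x)) P μ := (hun n).add ((hun n).sub hu)
      have h1 := hsub n _ hw'
      have h2 := psi_lip hQP (hlpn n) (hlmn n) (hvn n) hw' (hun n)
      have e1 : ∫ x, ζn n x * ((un n x + (un n x - u x)) - un n x) ∂μ =
          -∫ x, ζn n x * (u x - un n x) ∂μ := by
        rw [← integral_neg]
        congr 1; funext x; ring
      have e2 : eLpNorm (fun x => (un n x + (un n x - u x)) - un n x) P μ =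
          eLpNorm (fun x => u x - un n x) P μ := by
        rw [show (fun x => (un n x + (un n x - u x)) - un n x) =
          fun x => -(u x - un n x) by funext x; ring]
        exact negnorm _
      rw [e1] at h1
      rw [e2] at h2
      linarith
    · have h1 := hsub n u hu
      have h2 := psi_lip hQP (hlpn n) (hlmn n) (hvn n) hu (hun n)
      linarith
  have Mb : ∀ n, ((eLpNorm (lpn n) Q μ).toReal + (eLpNorm (lmn n) Q μ).toReal) *
        (eLpNorm (fun x => u x - un n x) P μ).toReal ≤
      (((eLpNorm (fun x => lpn n x - lp x) Q μ).toReal + (eLpNorm lp Q μ).toReal) +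
       ((eLpNorm (fun x => lmn n x - lm x) Q μ).toReal + (eLpNorm lm Q μ).toReal)) *
        (eLpNorm (fun x => u x - un n x) P μ).toReal := by
    intro n
    refine mul_le_mul_of_nonneg_right (add_le_add ?_ ?_) ENNReal.toReal_nonneg
    · exact aux_tri hQ (hlpn n) hlp
    · exact aux_tri hQ (hlmn n) hlm
  have T3b : Tendsto (fun n => ∫ x, ζn n x * (u x - un n x) ∂μ) atTop (nhds 0) := by
    refine squeeze_zero_norm (fun n => le_trans ?_ (Mb n)) ?_
    · rw [Real.norm_eq_abs]; exact key n
    · have := (((hlpc'.add (tendsto_const_nhds (x := (eLpNorm lp Q μ).toReal))).add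
        (hlmc'.add (tendsto_const_nhds (x := (eLpNorm lm Q μ).toReal)))).mul hGn')
      simpa using this
  have T3a := hζweak (fun x => w x - u x) (hw.sub hu)
  have split : ∀ n, ∫ x, ζn n x * (w x - un n x) ∂μ =
      (∫ x, ζn n x * (w x - u x) ∂μ) + ∫ x, ζn n x * (u x - un n x) ∂μ := by
    intro n
    have i1 := (aux_holder hQP (hζn n) (hw.sub hu)).1
    have i2 := (aux_holder hQP (hζn n) (hu.sub (hun n))).1
    simp only [Pi.sub_apply] at i1 i2
    rw [← integral_add i1 i2]
    congr 1; funext x; ring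
  have T3 : Tendsto (fun n => ∫ x, ζn n x * (w x - un n x) ∂μ) atTop
      (nhds (∫ x, ζ x * (w x - u x) ∂μ)) := by
    have := T3a.add T3b
    rw [add_zero] at this
    exact this.congr fun n => (split n).symm
  have TF := (T1.sub T2).sub T3
  have hnonneg : 0 ≤ Psi μ lp lm v w - Psi μ lp lm v u - ∫ x, ζ x * (w x - u x) ∂μ :=
    ge_of_tendsto' TF fun n => by linarith [hsub n w hw]
  linarith
end

section
/- Let (X, μ) be a finite measure space, let χ_n be measurable functions with 0 ≤ χ_n ≤ 1 almost everywhere, let A ⊆ X be a measurable set, and suppose that ∫_X χ_n·g dμ → ∫_A g dμ for every g ∈ L¹(μ). Then for every r ∈ [1, ∞), ∫_X |χ_n − 𝟙_A|^r dμ → 0, i.e. χ_n converges to the indicator function 𝟙_A strongly in L^r(μ). -/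
open MeasureTheory Filter

theorem stmt17 {X : Type*} [MeasurableSpace X] (μ : Measure X) [IsFiniteMeasure μ]
    (χn : ℕ → X → ℝ) (hχnm : ∀ n, Measurable (χn n))
    (hχn01 : ∀ n, ∀ᵐ x ∂μ, 0 ≤ χn n x ∧ χn n x ≤ 1)
    (A : Set X) (hA : MeasurableSet A)
    (hweak : ∀ g : X → ℝ, Integrable g μ →
      Tendsto (fun n => ∫ x, χn n x * g x ∂μ) atTop (nhds (∫ x in A, g x ∂μ))) :
    ∀ r : ℝ, 1 ≤ r →
      Tendsto (fun n => ∫ x, |χn n x - A.indicator (fun _ => (1 : ℝ)) x| ^ r ∂μ)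
        atTop (nhds 0) := by
  intro r hr
  set f : X → ℝ := A.indicator (fun _ => (1:ℝ)) with hf
  have hfm : Measurable f := measurable_const.indicator hA
  have hint : ∀ n, Integrable (χn n) μ := by
    intro n
    refine (integrable_const (1:ℝ)).mono' (hχnm n).aestronglyMeasurable ?_
    filter_upwards [hχn01 n] with x hx
    rw [Real.norm_eq_abs, abs_le]
    exact ⟨by linarith [hx.1], hx.2⟩
  have hintf : Integrable f μ := (integrable_const 1).indicator hA
  have hmulf : ∀ n, (fun x => χn n x * f x) = A.indicator (χn n) := by
    intro n
    ext x
    by_cases hx : x ∈ A <;> simp [hf, Set.indicator, hx]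
  have hintA : ∀ n, Integrable (fun x => χn n x * f x) μ := by
    intro n
    rw [hmulf n]
    exact (hint n).indicator hA
  have h2 : Tendsto (fun n => ∫ x, χn n x ∂μ) atTop (nhds (μ A).toReal) := by
    have := hweak (fun _ => 1) (integrable_const 1)
    simpa [Measure.real] using this
  have h1 : Tendsto (fun n => ∫ x, χn n x * f x ∂μ) atTop (nhds (μ A).toReal) := by
    have := hweak f hintf
    have hAf : ∫ x in A, f x ∂μ = (μ A).toReal := by
      rw [hf, setIntegral_indicator hA]
      simp [Set.inter_self, Measure.real]
    rwa [hAf] at this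
  have h0 : Tendsto (fun n => ∫ x, |χn n x - f x| ∂μ) atTop (nhds 0) := by
    have heq : ∀ n, ∫ x, |χn n x - f x| ∂μ
        = (∫ x, χn n x ∂μ) + (μ A).toReal - 2 * ∫ x, χn n x * f x ∂μ := by
      intro n
      have hptw : ∫ x, |χn n x - f x| ∂μ
          = ∫ x, (χn n x + f x - 2 * (χn n x * f x)) ∂μ := by
        apply integral_congr_ae
        filter_upwards [hχn01 n] with x hx
        by_cases hxA : x ∈ A
        · simp only [hf, Set.indicator_of_mem hxA]
          rw [abs_of_nonpos (by linarith [hx.2])]; ring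
        · simp only [hf, Set.indicator_of_notMem hxA]
          rw [sub_zero, abs_of_nonneg hx.1]; ring
      have hfint : ∫ x, f x ∂μ = (μ A).toReal := by
        rw [hf, integral_indicator hA]; simp [Measure.real]
      have ha : Integrable (fun x => χn n x + f x) μ := (hint n).add hintf
      have hb : Integrable (fun x => 2 * (χn n x * f x)) μ := (hintA n).const_mul 2
      rw [hptw, integral_sub ha hb, integral_add (hint n) hintf,
        MeasureTheory.integral_const_mul, hfint]
    have : Tendsto (fun n => (∫ x, χn n x ∂μ) + (μ A).toReal
        - 2 * ∫ x, χn n x * f x ∂μ) atTop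
        (nhds ((μ A).toReal + (μ A).toReal - 2 * (μ A).toReal)) :=
      (h2.add tendsto_const_nhds).sub ((h1.const_mul 2))
    simp only [heq]
    have hz : (μ A).toReal + (μ A).toReal - 2 * (μ A).toReal = 0 := by ring
    rwa [hz] at this
  -- a.e. bound |χn - f| ≤ 1
  have hbd : ∀ n, ∀ᵐ x ∂μ, |χn n x - f x| ≤ 1 := by
    intro n
    filter_upwards [hχn01 n] with x hx
    by_cases hxA : x ∈ A
    · simp only [hf, Set.indicator_of_mem hxA]
      rw [abs_of_nonpos (by linarith [hx.2])]; linarith [hx.1]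
    · simp only [hf, Set.indicator_of_notMem hxA]
      rw [sub_zero, abs_of_nonneg hx.1]; exact hx.2
  have hmr : ∀ n, Measurable (fun x => |χn n x - f x| ^ r) :=
    fun n => (((hχnm n).sub hfm).abs).pow_const r
  have hintr : ∀ n, Integrable (fun x => |χn n x - f x| ^ r) μ := by
    intro n
    refine (integrable_const (1:ℝ)).mono' (hmr n).aestronglyMeasurable ?_
    filter_upwards [hbd n] with x hx
    rw [Real.norm_eq_abs, abs_of_nonneg (Real.rpow_nonneg (abs_nonneg _) r)]
    calc |χn n x - f x| ^ r ≤ 1 ^ r :=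
          Real.rpow_le_rpow (abs_nonneg _) hx (by linarith)
      _ = 1 := Real.one_rpow r
  refine squeeze_zero (fun n => integral_nonneg fun x =>
    Real.rpow_nonneg (abs_nonneg _) r) (fun n => ?_) h0
  refine integral_mono_ae (hintr n) (((hint n).sub hintf).abs) ?_
  filter_upwards [hbd n] with x hx
  rcases eq_or_lt_of_le (abs_nonneg (χn n x - f x)) with h | h
  · rw [← h, Real.zero_rpow (by linarith)]
  · calc |χn n x - f x| ^ r ≤ |χn n x - f x| ^ (1:ℝ) :=
        Real.rpow_le_rpow_of_exponent_ge h hx hr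
      _ = |χn n x - f x| := Real.rpow_one _
end

section
/- Let (X, μ) be a finite measure space, 1 ≤ p < ∞, let u_n → u and v_n → v in L^p(μ), and assume the nondegeneracy condition μ({u = v}) = 0. Then for every r ∈ [1, ∞), ∫_X |𝟙_{\{u_n > v_n\}} − 𝟙_{\{u > v\}}|^r dμ → 0; equivalently, μ({u_n > v_n} Δ {u > v}) → 0, and likewise 𝟙_{\{u_n < v_n\}} → 𝟙_{\{u < v\}} in L^r(μ). -/
open MeasureTheory Filter
open scoped symmDiff

-- core measure lemma
lemma lemA {X : Type*} [MeasurableSpace X] (μ : Measure X) [IsFiniteMeasure μ]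
    (fn : ℕ → X → ℝ) (f : X → ℝ) (hf : AEMeasurable f μ)
    (h : TendstoInMeasure μ fn atTop f) (h0 : μ {x | f x = 0} = 0) :
    Tendsto (fun n => μ ({x | 0 < fn n x} ∆ {x | 0 < f x})) atTop (nhds 0) := by
  rw [ENNReal.tendsto_nhds_zero]
  intro ε hε
  set f' := hf.mk f with hf'def
  have hf'm : Measurable f' := hf.measurable_mk
  have hff' : f =ᵐ[μ] f' := hf.ae_eq_mk
  -- sets A k = {x | |f' x| ≤ 1/(k+1)}
  set A : ℕ → Set X := fun k => {x | |f' x| ≤ 1 / (k + 1)} with hA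
  have hAm : ∀ k, MeasurableSet (A k) := fun k =>
    (hf'm.abs) measurableSet_Iic
  have hanti : Antitone A := by
    intro k l hkl x hx
    simp only [hA, Set.mem_setOf_eq] at hx ⊢
    refine hx.trans (one_div_le_one_div_of_le (by positivity) ?_)
    have : (k : ℝ) ≤ l := Nat.cast_le.mpr hkl
    linarith
  have hiInter : (⋂ k, A k) = {x | f' x = 0} := by
    ext x
    simp only [Set.mem_iInter, hA, Set.mem_setOf_eq]
    constructor
    · intro hx
      have : |f' x| ≤ 0 := by
        by_contra hc
        push_neg at hc
        obtain ⟨k, hk⟩ := exists_nat_one_div_lt hc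
        exact absurd (hx k) (by push_neg; exact_mod_cast hk)
      have := abs_nonneg (f' x)
      have : |f' x| = 0 := le_antisymm ‹_› ‹_›
      exact abs_eq_zero.mp this
    · intro hx k; rw [hx]; simp; positivity
  have h0' : μ {x | f' x = 0} = 0 := by
    rw [← h0]
    apply measure_congr
    filter_upwards [hff'] with x hx
    exact congrArg (fun t => (t = 0 : Prop)) hx.symm
  have hAtend : Tendsto (fun k => μ (A k)) atTop (nhds 0) := by
    have := tendsto_measure_iInter_atTop (μ := μ)
      (fun k => (hAm k).nullMeasurableSet) hanti ⟨0, measure_ne_top μ _⟩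
    rw [hiInter, h0'] at this
    exact this
  obtain ⟨k, hk⟩ := (ENNReal.tendsto_nhds_zero.mp hAtend (ε / 2)
    (ENNReal.half_pos hε.ne')).exists
  set δ : ℝ := 1 / (k + 1) with hδdef
  have hδ : 0 < δ := by positivity
  have hmeas := ENNReal.tendsto_nhds_zero.mp (h (ENNReal.ofReal δ) (ENNReal.ofReal_pos.mpr hδ)) (ε / 2) (ENNReal.half_pos hε.ne')
  filter_upwards [hmeas] with n hn
  have hset : {x | ENNReal.ofReal δ ≤ edist (fn n x) (f x)} = {x | δ ≤ dist (fn n x) (f x)} := by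
    ext x; simp only [Set.mem_setOf_eq, edist_dist]; exact ENNReal.ofReal_le_ofReal_iff dist_nonneg
  rw [hset] at hn
  have hsub : ({x | 0 < fn n x} ∆ {x | 0 < f x}) ⊆
      {x | δ ≤ dist (fn n x) (f x)} ∪ {x | |f x| ≤ δ} := by
    intro x hx
    rcases Set.mem_symmDiff.mp hx with ⟨h1, h2⟩ | ⟨h1, h2⟩ <;>
      simp only [Set.mem_setOf_eq, not_lt] at h1 h2 <;>
      by_cases hfd : |f x| ≤ δ
    · exact Or.inr hfd
    · push_neg at hfd
      have habs : |f x| = -(f x) := abs_of_nonpos h2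
      left
      rw [Set.mem_setOf_eq, Real.dist_eq]
      have := le_abs_self (fn n x - f x)
      linarith
    · exact Or.inr hfd
    · push_neg at hfd
      have habs : |f x| = f x := abs_of_pos h1
      left
      rw [Set.mem_setOf_eq, Real.dist_eq]
      have := neg_abs_le (fn n x - f x)
      linarith
  calc μ ({x | 0 < fn n x} ∆ {x | 0 < f x})
      ≤ μ ({x | δ ≤ dist (fn n x) (f x)} ∪ {x | |f x| ≤ δ}) := measure_mono hsub
    _ ≤ μ {x | δ ≤ dist (fn n x) (f x)} + μ {x | |f x| ≤ δ} := measure_union_le _ _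
    _ ≤ ε / 2 + ε / 2 := by
        refine add_le_add hn ?_
        have : μ {x | |f x| ≤ δ} = μ (A k) := by
          apply measure_congr
          filter_upwards [hff'] with x hx
          exact congrArg (fun t => (|t| ≤ δ : Prop)) hx
        rw [this]; exact hk
    _ = ε := ENNReal.add_halves ε

-- integral lemma
lemma lemB {X : Type*} [MeasurableSpace X] (μ : Measure X) [IsFiniteMeasure μ]
    (An : ℕ → Set X) (B : Set X)
    (hAn : ∀ n, NullMeasurableSet (An n) μ) (hB : NullMeasurableSet B μ)
    (h : Tendsto (fun n => μ (An n ∆ B)) atTop (nhds 0)) (r : ℝ) (hr : 1 ≤ r) :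
    Tendsto (fun n => ∫ x, |Set.indicator (An n) (fun _ => (1 : ℝ)) x -
        Set.indicator B (fun _ => (1 : ℝ)) x| ^ r ∂μ) atTop (nhds 0) := by
  have hr0 : r ≠ 0 := by linarith
  have key : ∀ n, (∫ x, |Set.indicator (An n) (fun _ => (1 : ℝ)) x -
      Set.indicator B (fun _ => (1 : ℝ)) x| ^ r ∂μ) = (μ (An n ∆ B)).toReal := by
    intro n
    have hD : NullMeasurableSet (An n ∆ B) μ := (hAn n).symmDiff hB
    have hae := hD.toMeasurable_ae_eq
    have hpt : ∀ x, |Set.indicator (An n) (fun _ => (1 : ℝ)) x -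
        Set.indicator B (fun _ => (1 : ℝ)) x| ^ r
        = Set.indicator (An n ∆ B) (fun _ => (1 : ℝ)) x := by
      intro x
      by_cases hx : x ∈ An n <;> by_cases hy : x ∈ B <;>
        simp [Set.indicator, hx, hy, Set.mem_symmDiff, Real.zero_rpow hr0, Real.one_rpow]
    calc (∫ x, |Set.indicator (An n) (fun _ => (1 : ℝ)) x -
          Set.indicator B (fun _ => (1 : ℝ)) x| ^ r ∂μ)
        = ∫ x, Set.indicator (An n ∆ B) (fun _ => (1 : ℝ)) x ∂μ := by
          simp only [hpt]
      _ = ∫ x, Set.indicator (toMeasurable μ (An n ∆ B)) (fun _ => (1 : ℝ)) x ∂μ := by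
          apply integral_congr_ae
          filter_upwards [Filter.eventuallyEq_set.mp hae] with x hx
          by_cases h1 : x ∈ An n ∆ B
          · rw [Set.indicator_of_mem h1, Set.indicator_of_mem (hx.mpr h1)]
          · rw [Set.indicator_of_notMem h1,
              Set.indicator_of_notMem (fun h => h1 (hx.mp h))]
      _ = (μ (toMeasurable μ (An n ∆ B))).toReal :=
          integral_indicator_one (measurableSet_toMeasurable μ _)
      _ = (μ (An n ∆ B)).toReal := by rw [measure_toMeasurable]
  simp only [key]
  have := (ENNReal.tendsto_toReal (by norm_num : (0 : ENNReal) ≠ ⊤)).comp h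
  simpa [Function.comp_def] using this

theorem stmt18 {X : Type*} [MeasurableSpace X] (μ : Measure X) [IsFiniteMeasure μ]
    (p : ℝ) (hp : 1 ≤ p)
    (un vn : ℕ → X → ℝ) (u v : X → ℝ)
    (hun : ∀ n, MemLp (un n) (ENNReal.ofReal p) μ)
    (hvn : ∀ n, MemLp (vn n) (ENNReal.ofReal p) μ)
    (hu : MemLp u (ENNReal.ofReal p) μ) (hv : MemLp v (ENNReal.ofReal p) μ)
    (huc : Tendsto (fun n => eLpNorm (fun x => un n x - u x) (ENNReal.ofReal p) μ)
      atTop (nhds 0))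
    (hvc : Tendsto (fun n => eLpNorm (fun x => vn n x - v x) (ENNReal.ofReal p) μ)
      atTop (nhds 0))
    (hnd : μ {x | u x = v x} = 0) :
    (∀ r : ℝ, 1 ≤ r →
      Tendsto (fun n => ∫ x,
          |Set.indicator {y | vn n y < un n y} (fun _ => (1 : ℝ)) x -
            Set.indicator {y | v y < u y} (fun _ => (1 : ℝ)) x| ^ r ∂μ)
        atTop (nhds 0)) ∧
    Tendsto (fun n => μ (symmDiff {y | vn n y < un n y} {y | v y < u y})) atTop (nhds 0) ∧
    (∀ r : ℝ, 1 ≤ r →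
      Tendsto (fun n => ∫ x,
          |Set.indicator {y | un n y < vn n y} (fun _ => (1 : ℝ)) x -
            Set.indicator {y | u y < v y} (fun _ => (1 : ℝ)) x| ^ r ∂μ)
        atTop (nhds 0)) := by
  have hpne : (ENNReal.ofReal p) ≠ 0 := by
    simp [ENNReal.ofReal_eq_zero]; linarith
  have hp1 : (1 : ENNReal) ≤ ENNReal.ofReal p := by
    rw [← ENNReal.ofReal_one]; exact ENNReal.ofReal_le_ofReal hp
  -- generic: convergence in measure of differences
  have main : ∀ (an bn : ℕ → X → ℝ) (a b : X → ℝ),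
      (∀ n, MemLp (an n) (ENNReal.ofReal p) μ) →
      (∀ n, MemLp (bn n) (ENNReal.ofReal p) μ) →
      MemLp a (ENNReal.ofReal p) μ → MemLp b (ENNReal.ofReal p) μ →
      Tendsto (fun n => eLpNorm (fun x => an n x - a x) (ENNReal.ofReal p) μ) atTop (nhds 0) →
      Tendsto (fun n => eLpNorm (fun x => bn n x - b x) (ENNReal.ofReal p) μ) atTop (nhds 0) →
      μ {x | a x = b x} = 0 →
      Tendsto (fun n => μ (symmDiff {y | bn n y < an n y} {y | b y < a y})) atTop (nhds 0) := by
    intro an bn a b han hbn ha hb hac hbc h0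
    have hfmeas : AEMeasurable (fun x => a x - b x) μ :=
      (ha.aestronglyMeasurable.aemeasurable.sub hb.aestronglyMeasurable.aemeasurable)
    have htim : TendstoInMeasure μ (fun n x => an n x - bn n x) atTop (fun x => a x - b x) := by
      apply tendstoInMeasure_of_tendsto_eLpNorm hpne
        (fun n => ((han n).sub (hbn n)).aestronglyMeasurable)
        (ha.sub hb).aestronglyMeasurable
      have hle : ∀ n, eLpNorm ((fun x => an n x - bn n x) - fun x => a x - b x)
          (ENNReal.ofReal p) μ ≤
          eLpNorm (fun x => an n x - a x) (ENNReal.ofReal p) μ +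
          eLpNorm (fun x => bn n x - b x) (ENNReal.ofReal p) μ := by
        intro n
        have : ((fun x => an n x - bn n x) - fun x => a x - b x) =
            (fun x => an n x - a x) - (fun x => bn n x - b x) := by
          funext x; simp [Pi.sub_apply]; ring
        rw [this]
        exact eLpNorm_sub_le ((han n).sub ha).aestronglyMeasurable
          ((hbn n).sub hb).aestronglyMeasurable hp1
      have hsum : Tendsto (fun n => eLpNorm (fun x => an n x - a x) (ENNReal.ofReal p) μ +
          eLpNorm (fun x => bn n x - b x) (ENNReal.ofReal p) μ) atTop (nhds 0) := by
        simpa using Tendsto.add hac hbc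
      exact tendsto_of_tendsto_of_tendsto_of_le_of_le tendsto_const_nhds hsum
        (fun n => zero_le) hle
    have := lemA μ (fun n x => an n x - bn n x) (fun x => a x - b x) hfmeas htim
      (by
        rw [← h0]
        congr 1
        ext x
        simp [sub_eq_zero])
    convert this using 3 with n
    congr 1 <;> ext x <;> simp [sub_pos]
  have h2 := main un vn u v hun hvn hu hv huc hvc hnd
  have h2' := main vn un v u hvn hun hv hu hvc huc
    (by rw [← hnd]; congr 1; ext x; exact eq_comm)
  refine ⟨fun r hr => ?_, h2, fun r hr => ?_⟩
  · exact lemB μ (fun n => {y | vn n y < un n y}) {y | v y < u y}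
      (fun n => nullMeasurableSet_lt (hvn n).aestronglyMeasurable.aemeasurable
        (hun n).aestronglyMeasurable.aemeasurable)
      (nullMeasurableSet_lt hv.aestronglyMeasurable.aemeasurable hu.aestronglyMeasurable.aemeasurable) h2 r hr
  · exact lemB μ (fun n => {y | un n y < vn n y}) {y | u y < v y}
      (fun n => nullMeasurableSet_lt (hun n).aestronglyMeasurable.aemeasurable
        (hvn n).aestronglyMeasurable.aemeasurable)
      (nullMeasurableSet_lt hu.aestronglyMeasurable.aemeasurable hv.aestronglyMeasurable.aemeasurable) h2' r hr
end

section
/- Let Ω ⊂ ℝ^d be a bounded measurable set equipped with Lebesgue measure, 1 < p < ∞, C ≥ 0, and let φ ∈ L^p(Ω×Ω) be nonnegative. Let τ : Ω×Ω×ℝ → ℝ be a Carathéodory function, i.e. (x,y) ↦ τ(x,y,r) is measurable for each fixed r ∈ ℝ and r ↦ τ(x,y,r) is continuous for almost every (x,y) ∈ Ω×Ω, satisfying the growth condition |τ(x,y,r)| ≤ φ(x,y) + C·|r| for almost every (x,y) ∈ Ω×Ω and all r ∈ ℝ. Then for every u ∈ L^p(Ω) the Uryson operator Φ(u)(x) =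 ∫_Ω τ(x, y, u(y)) dy defines an element Φ(u) ∈ L^p(Ω), and the map Φ : L^p(Ω) → L^p(Ω) is continuous. -/
open MeasureTheory Filter Function Set
open scoped ENNReal NNReal Topology

namespace Stmt19Aux

variable {α : Type*} [MeasurableSpace α] {μ : Measure α} [IsFiniteMeasure μ] {p : ℝ}

lemma _root_.Measurable.ennrpow_const {β : Type*} [MeasurableSpace β] {f : β → ℝ≥0∞}
    (hf : Measurable f) (q : ℝ) : Measurable fun x => f x ^ q :=
  ENNReal.continuous_rpow_const.measurable.comp hf

lemma rpow_one_div_cancel (hp : 0 < p) (x : ℝ≥0∞) : (x ^ (1/p)) ^ p = x := by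
  rw [← ENNReal.rpow_mul, one_div, inv_mul_cancel₀ hp.ne', ENNReal.rpow_one]

lemma rpow_one_div_cancel' (hp : 0 < p) (x : ℝ≥0∞) : (x ^ p) ^ (1/p) = x := by
  rw [← ENNReal.rpow_mul, one_div, mul_inv_cancel₀ hp.ne', ENNReal.rpow_one]

/-- Hölder with constant 1 on a finite measure space. -/
lemma lintegral_le_rpow (hp : 1 < p) {f : α → ℝ≥0∞} (hf : AEMeasurable f μ) :
    ∫⁻ y, f y ∂μ ≤ (∫⁻ y, f y ^ p ∂μ) ^ (1/p) * μ univ ^ (1 - 1/p) := by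
  have hconj := Real.HolderConjugate.conjExponent hp
  have h1 := ENNReal.lintegral_mul_le_Lp_mul_Lq μ hconj hf (g := fun _ => 1) aemeasurable_const
  simp only [mul_one, ENNReal.one_rpow, lintegral_const, one_mul, Pi.mul_apply] at h1
  have hq : 1 / Real.conjExponent p = 1 - 1/p := by
    have := hconj.inv_add_inv_eq_one
    rw [one_div, one_div]
    linarith
  rwa [hq] at h1

lemma lintegral_ne_top_of_rpow (hp : 1 < p) {f : α → ℝ≥0∞} (hf : AEMeasurable f μ)
    (hfp : ∫⁻ y, f y ^ p ∂μ ≠ ∞) : ∫⁻ y, f y ∂μ ≠ ∞ := by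
  refine ne_top_of_le_ne_top ?_ (lintegral_le_rpow hp hf)
  have h1 : (0:ℝ) ≤ 1 - 1/p := by
    have : 1/p ≤ 1 := by
      rw [div_le_one (by linarith)]; linarith
    linarith
  exact ENNReal.mul_ne_top (ENNReal.rpow_ne_top_of_nonneg (by positivity) hfp)
    (ENNReal.rpow_ne_top_of_nonneg h1 (measure_ne_top μ _))

lemma slice_bound (hp : 1 < p) {H : α × α → ℝ≥0∞} (hH : Measurable H) :
    ∫⁻ x, (∫⁻ y, H (x, y) ∂μ) ^ p ∂μ ≤
      μ univ ^ (p - 1) * ∫⁻ z, H z ^ p ∂(μ.prod μ) := by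
  have hp0 : (0:ℝ) < p := zero_lt_one.trans hp
  have key : ∀ x, (∫⁻ y, H (x, y) ∂μ) ^ p ≤ μ univ ^ (p - 1) * ∫⁻ y, H (x, y) ^ p ∂μ := by
    intro x
    have hm : AEMeasurable (fun y => H (x, y)) μ := (hH.comp measurable_prodMk_left).aemeasurable
    calc (∫⁻ y, H (x, y) ∂μ) ^ p
        ≤ ((∫⁻ y, H (x, y) ^ p ∂μ) ^ (1/p) * μ univ ^ (1 - 1/p)) ^ p :=
          ENNReal.rpow_le_rpow (lintegral_le_rpow hp hm) hp0.le
      _ = μ univ ^ (p - 1) * ∫⁻ y, H (x, y) ^ p ∂μ := by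
          have hexp : (1 - 1/p) * p = p - 1 := by field_simp
          rw [ENNReal.mul_rpow_of_nonneg _ _ hp0.le, rpow_one_div_cancel hp0,
            ← ENNReal.rpow_mul, hexp, mul_comm]
  have hmeas : Measurable fun x => ∫⁻ y, H (x, y) ^ p ∂μ :=
    Measurable.lintegral_prod_right' (hH.ennrpow_const p)
  calc ∫⁻ x, (∫⁻ y, H (x, y) ∂μ) ^ p ∂μ
      ≤ ∫⁻ x, μ univ ^ (p - 1) * ∫⁻ y, H (x, y) ^ p ∂μ ∂μ := lintegral_mono key
    _ = μ univ ^ (p - 1) * ∫⁻ x, ∫⁻ y, H (x, y) ^ p ∂μ ∂μ := lintegral_const_mul _ hmeas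
    _ = μ univ ^ (p - 1) * ∫⁻ z, H z ^ p ∂(μ.prod μ) := by
        rw [lintegral_prod _ (hH.ennrpow_const p).aemeasurable]

/-- Nice data for the Uryson operator. -/
structure Nice (μ : Measure α) (p : ℝ) (C : ℝ≥0∞) (g : α × α → ℝ → ℝ) (ψ : α × α → ℝ≥0∞) :
    Prop where
  hg : Measurable fun q : (α × α) × ℝ => g q.1 q.2
  hgc : ∀ z, Continuous (g z)
  hψ : Measurable ψ
  hψp : ∫⁻ z, ψ z ^ p ∂(μ.prod μ) ≠ ∞
  hgrowth : ∀ z r, (‖g z r‖₊ : ℝ≥0∞) ≤ ψ z + C * ‖r‖₊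

variable {C : ℝ≥0∞} {g : α × α → ℝ → ℝ} {ψ : α × α → ℝ≥0∞}

lemma Nice.bound_lintegral (hp : 1 < p) (hC : C ≠ ∞) (hN : Nice μ p C g ψ)
    {G : α → ℝ≥0∞} (hG : Measurable G) (hGp : ∫⁻ y, G y ^ p ∂μ ≠ ∞) :
    ∫⁻ z, (ψ z + C * G z.2) ^ p ∂(μ.prod μ) ≠ ∞ := by
  have hp0 : (0:ℝ) < p := zero_lt_one.trans hp
  have hb : ∀ z, (ψ z + C * G z.2) ^ p ≤
      (2:ℝ≥0∞) ^ (p-1) * (ψ z ^ p + C ^ p * G z.2 ^ p) := by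
    intro z
    calc (ψ z + C * G z.2) ^ p
        ≤ (2:ℝ≥0∞) ^ (p-1) * (ψ z ^ p + (C * G z.2) ^ p) :=
          ENNReal.rpow_add_le_mul_rpow_add_rpow _ _ hp.le
      _ = (2:ℝ≥0∞) ^ (p-1) * (ψ z ^ p + C ^ p * G z.2 ^ p) := by
          rw [ENNReal.mul_rpow_of_nonneg _ _ hp0.le]
  have hGsnd : Measurable fun z : α × α => G z.2 ^ p := (hG.comp measurable_snd).ennrpow_const p
  refine ne_top_of_le_ne_top ?_ (lintegral_mono hb)
  rw [lintegral_const_mul]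
  · refine ENNReal.mul_ne_top (ENNReal.rpow_ne_top_of_nonneg (by linarith) (by simp)) ?_
    rw [lintegral_add_left (hN.hψ.ennrpow_const p)]
    refine ENNReal.add_ne_top.2 ⟨hN.hψp, ?_⟩
    rw [lintegral_const_mul _ hGsnd]
    refine ENNReal.mul_ne_top (ENNReal.rpow_ne_top_of_nonneg hp0.le hC) ?_
    have : ∫⁻ z, G z.2 ^ p ∂(μ.prod μ) = μ univ * ∫⁻ y, G y ^ p ∂μ := by
      rw [lintegral_prod _ hGsnd.aemeasurable]
      simp [lintegral_const, mul_comm]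
    rw [this]
    exact ENNReal.mul_ne_top (measure_ne_top μ _) hGp
  · exact ((hN.hψ.ennrpow_const p).add
      ((ENNReal.continuous_rpow_const.measurable.comp (hG.comp measurable_snd)).const_mul _))


lemma Nice.memLp (hp : 1 < p) (hC : C ≠ ∞) (hN : Nice μ p C g ψ)
    {u : α → ℝ} (hu : Measurable u) (hup : ∫⁻ y, (‖u y‖₊ : ℝ≥0∞) ^ p ∂μ ≠ ∞) :
    MemLp (fun x => ∫ y, g (x, y) (u y) ∂μ) (ENNReal.ofReal p) μ := by
  have hp0 : (0:ℝ) < p := zero_lt_one.trans hp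
  set W : α × α → ℝ := fun z => g z (u z.2) with hWdef
  have hW : Measurable W := hN.hg.comp (measurable_id.prodMk (hu.comp measurable_snd))
  set B : α × α → ℝ≥0∞ := fun z => ψ z + C * ‖u z.2‖₊ with hBdef
  have hB : Measurable B := hN.hψ.add (((hu.comp measurable_snd).enorm).const_mul _)
  have hWB : ∀ z, (‖W z‖₊ : ℝ≥0∞) ≤ B z := fun z => hN.hgrowth z (u z.2)
  have hBp : ∫⁻ z, B z ^ p ∂(μ.prod μ) ≠ ∞ :=
    hN.bound_lintegral hp hC hu.enorm hup
  -- pointwise bound on the integral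
  have hkey : ∀ x, (‖∫ y, g (x, y) (u y) ∂μ‖₊ : ℝ≥0∞) ≤ ∫⁻ y, B (x, y) ∂μ := by
    intro x
    calc (‖∫ y, g (x, y) (u y) ∂μ‖₊ : ℝ≥0∞)
        ≤ ∫⁻ y, ‖W (x, y)‖₊ ∂μ := enorm_integral_le_lintegral_enorm _
      _ ≤ ∫⁻ y, B (x, y) ∂μ := lintegral_mono fun y => hWB (x, y)
  refine ⟨(hW.stronglyMeasurable.integral_prod_right').aestronglyMeasurable, ?_⟩
  rw [eLpNorm_lt_top_iff_lintegral_rpow_enorm_lt_top (by simp [hp0]) (by simp),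
    ENNReal.toReal_ofReal hp0.le]
  calc ∫⁻ x, (‖∫ y, g (x, y) (u y) ∂μ‖₊ : ℝ≥0∞) ^ p ∂μ
      ≤ ∫⁻ x, (∫⁻ y, B (x, y) ∂μ) ^ p ∂μ :=
        lintegral_mono fun x => ENNReal.rpow_le_rpow (hkey x) hp0.le
    _ ≤ μ univ ^ (p - 1) * ∫⁻ z, B z ^ p ∂(μ.prod μ) := slice_bound hp hB
    _ < ∞ := ENNReal.mul_lt_top
        (ENNReal.rpow_lt_top_of_nonneg (by linarith) (measure_ne_top μ _)) hBp.lt_top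

lemma Nice.tendsto (hp : 1 < p) (hC : C ≠ ∞) (hN : Nice μ p C g ψ)
    {v : ℕ → α → ℝ} (hv : ∀ k, Measurable (v k)) {u₀ : α → ℝ} (hu₀ : Measurable u₀)
    {G : α → ℝ≥0∞} (hG : Measurable G) (hGp : ∫⁻ y, G y ^ p ∂μ ≠ ∞)
    (hdom : ∀ k y, (‖v k y‖₊ : ℝ≥0∞) ≤ G y) (hdom0 : ∀ y, (‖u₀ y‖₊ : ℝ≥0∞) ≤ G y)
    (hae : ∀ᵐ y ∂μ, Tendsto (fun k => v k y) atTop (𝓝 (u₀ y))) :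
    Tendsto (fun k => eLpNorm
      (fun x => (∫ y, g (x, y) (v k y) ∂μ) - ∫ y, g (x, y) (u₀ y) ∂μ)
      (ENNReal.ofReal p) μ) atTop (𝓝 0) := by
  have hp0 : (0:ℝ) < p := zero_lt_one.trans hp
  set W : ℕ → α × α → ℝ := fun k z => g z (v k z.2) with hWdef
  set V : α × α → ℝ := fun z => g z (u₀ z.2) with hVdef
  have hW : ∀ k, Measurable (W k) :=
    fun k => hN.hg.comp (measurable_id.prodMk ((hv k).comp measurable_snd))
  have hV : Measurable V := hN.hg.comp (measurable_id.prodMk (hu₀.comp measurable_snd))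
  set H : α × α → ℝ≥0∞ := fun z => ψ z + C * G z.2 with hHdef
  have hH : Measurable H := hN.hψ.add ((hG.comp measurable_snd).const_mul _)
  have hHslice : ∀ x, Measurable fun y => H (x, y) := fun x => hH.comp measurable_prodMk_left
  have hWH : ∀ k z, (‖W k z‖₊ : ℝ≥0∞) ≤ H z := fun k z =>
    (hN.hgrowth z (v k z.2)).trans (add_le_add_right (mul_le_mul_right (hdom k z.2) C) _)
  have hVH : ∀ z, (‖V z‖₊ : ℝ≥0∞) ≤ H z := fun z =>
    (hN.hgrowth z (u₀ z.2)).trans (add_le_add_right (mul_le_mul_right (hdom0 z.2) C) _)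
  have hHp : ∫⁻ z, H z ^ p ∂(μ.prod μ) ≠ ∞ := hN.bound_lintegral hp hC hG hGp
  have hH1 : ∫⁻ z, H z ∂(μ.prod μ) ≠ ∞ := lintegral_ne_top_of_rpow hp hH.aemeasurable hHp
  have hslice : ∀ᵐ x ∂μ, ∫⁻ y, H (x, y) ∂μ ≠ ∞ := by
    have h1 : ∫⁻ x, ∫⁻ y, H (x, y) ∂μ ∂μ ≠ ∞ := by
      rwa [← lintegral_prod _ hH.aemeasurable]
    filter_upwards [ae_lt_top (Measurable.lintegral_prod_right' hH) h1] with x hx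
    exact hx.ne
  -- a.e. convergence on the product space
  have hconv : ∀ᵐ z ∂(μ.prod μ), Tendsto (fun k => W k z) atTop (𝓝 (V z)) := by
    have h2 : ∀ᵐ z ∂(μ.prod μ), Tendsto (fun k => v k z.2) atTop (𝓝 (u₀ z.2)) :=
      Measure.quasiMeasurePreserving_snd.tendsto_ae.eventually hae
    filter_upwards [h2] with z hz
    exact ((hN.hgc z).tendsto (u₀ z.2)).comp hz
  set E : ℕ → α → ℝ≥0∞ := fun k x => ∫⁻ y, (‖W k (x, y) - V (x, y)‖₊ : ℝ≥0∞) ∂μ with hEdef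
  have hEmeas : ∀ k, Measurable (E k) :=
    fun k => Measurable.lintegral_prod_right' ((hW k).sub hV).enorm
  have hEdom : ∀ k x, E k x ≤ 2 * ∫⁻ y, H (x, y) ∂μ := by
    intro k x
    rw [← lintegral_const_mul _ (hHslice x)]
    refine lintegral_mono fun y => ?_
    calc (‖W k (x, y) - V (x, y)‖₊ : ℝ≥0∞)
        ≤ (‖W k (x, y)‖₊ : ℝ≥0∞) + ‖V (x, y)‖₊ := by
          exact_mod_cast nnnorm_sub_le _ _
      _ ≤ H (x, y) + H (x, y) := add_le_add (hWH k (x, y)) (hVH (x, y))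
      _ = 2 * H (x, y) := (two_mul _).symm
  have hEtend : ∀ᵐ x ∂μ, Tendsto (fun k => E k x) atTop (𝓝 0) := by
    filter_upwards [Measure.ae_ae_of_ae_prod hconv, hslice] with x hx hfin
    rw [hEdef, show (0:ℝ≥0∞) = ∫⁻ _, (0:ℝ≥0∞) ∂μ by simp]
    refine tendsto_lintegral_of_dominated_convergence (fun y => 2 * H (x, y))
      (fun k => (((hW k).sub hV).enorm).comp measurable_prodMk_left) ?_ ?_ ?_
    · intro k
      filter_upwards with y
      calc (‖W k (x, y) - V (x, y)‖₊ : ℝ≥0∞)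
          ≤ (‖W k (x, y)‖₊ : ℝ≥0∞) + ‖V (x, y)‖₊ := by exact_mod_cast nnnorm_sub_le _ _
        _ ≤ H (x, y) + H (x, y) := add_le_add (hWH k (x, y)) (hVH (x, y))
        _ = 2 * H (x, y) := (two_mul _).symm
    · rw [lintegral_const_mul _ (hHslice x)]
      exact ENNReal.mul_ne_top (by simp) hfin
    · filter_upwards [hx] with y hy
      have h1 : Tendsto (fun k => W k (x, y) - V (x, y)) atTop (𝓝 0) := by
        simpa using hy.sub_const (V (x, y))
      have h2 : Tendsto (fun k => (‖W k (x, y) - V (x, y)‖₊ : ℝ≥0∞)) atTop (𝓝 (‖(0:ℝ)‖₊ : ℝ≥0∞)) :=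
        ENNReal.tendsto_coe.2 h1.nnnorm
      simpa using h2
  -- outer dominated convergence
  have houter : Tendsto (fun k => ∫⁻ x, E k x ^ p ∂μ) atTop (𝓝 0) := by
    rw [show (0:ℝ≥0∞) = ∫⁻ _, (0:ℝ≥0∞) ∂μ by simp]
    refine tendsto_lintegral_of_dominated_convergence
      (fun x => (2 * ∫⁻ y, H (x, y) ∂μ) ^ p)
      (fun k => (hEmeas k).ennrpow_const p) ?_ ?_ ?_
    · intro k
      filter_upwards with x
      exact ENNReal.rpow_le_rpow (hEdom k x) hp0.le
    · have hb : ∀ x, (2 * ∫⁻ y, H (x, y) ∂μ) ^ p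
          = 2 ^ p * (∫⁻ y, H (x, y) ∂μ) ^ p := fun x =>
        ENNReal.mul_rpow_of_nonneg _ _ hp0.le
      simp only [hb]
      rw [lintegral_const_mul _ ((Measurable.lintegral_prod_right' hH).ennrpow_const p)]
      refine ENNReal.mul_ne_top (ENNReal.rpow_ne_top_of_nonneg hp0.le (by simp)) ?_
      exact ne_top_of_le_ne_top (ENNReal.mul_ne_top (ENNReal.rpow_ne_top_of_nonneg
        (by linarith) (measure_ne_top μ _)) hHp) (slice_bound hp hH)
    · filter_upwards [hEtend] with x hx
      have := ((ENNReal.continuous_rpow_const (y := p)).tendsto 0).comp hx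
      simpa [Function.comp_def, ENNReal.zero_rpow_of_pos hp0] using this
  -- assemble
  have hbound : ∀ k, eLpNorm
      (fun x => (∫ y, g (x, y) (v k y) ∂μ) - ∫ y, g (x, y) (u₀ y) ∂μ)
      (ENNReal.ofReal p) μ ≤ (∫⁻ x, E k x ^ p ∂μ) ^ (1/p) := by
    intro k
    have hptw : ∀ᵐ x ∂μ, (‖(∫ y, g (x, y) (v k y) ∂μ) - ∫ y, g (x, y) (u₀ y) ∂μ‖₊ : ℝ≥0∞)
        ≤ E k x := by
      filter_upwards [hslice] with x hfin
      have hik : Integrable (fun y => W k (x, y)) μ := by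
        refine ⟨(((hW k).comp measurable_prodMk_left).stronglyMeasurable).aestronglyMeasurable, ?_⟩
        have : HasFiniteIntegral (fun y => W k (x, y)) μ :=
          lt_of_le_of_lt (lintegral_mono fun y => hWH k (x, y)) hfin.lt_top
        exact this
      have hiv : Integrable (fun y => V (x, y)) μ := by
        refine ⟨((hV.comp measurable_prodMk_left).stronglyMeasurable).aestronglyMeasurable, ?_⟩
        have : HasFiniteIntegral (fun y => V (x, y)) μ :=
          lt_of_le_of_lt (lintegral_mono fun y => hVH (x, y)) hfin.lt_top
        exact this
      have heq : (∫ y, g (x, y) (v k y) ∂μ) - ∫ y, g (x, y) (u₀ y) ∂μ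
          = ∫ y, (W k (x, y) - V (x, y)) ∂μ := (integral_sub hik hiv).symm
      rw [heq]
      exact enorm_integral_le_lintegral_enorm _
    rw [eLpNorm_eq_lintegral_rpow_enorm_toReal (by simp [hp0]) (by simp),
      ENNReal.toReal_ofReal hp0.le]
    refine ENNReal.rpow_le_rpow ?_ (by positivity)
    exact lintegral_mono_ae (hptw.mono fun x hx => ENNReal.rpow_le_rpow hx hp0.le)
  have hlim : Tendsto (fun k => (∫⁻ x, E k x ^ p ∂μ) ^ (1/p)) atTop (𝓝 0) := by
    have := ((ENNReal.continuous_rpow_const (y := 1/p)).tendsto 0).comp houter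
    have h0 : (0:ℝ≥0∞) ^ p⁻¹ = 0 := ENNReal.zero_rpow_of_pos (by positivity)
    simpa [Function.comp_def, h0] using this
  exact tendsto_of_tendsto_of_tendsto_of_le_of_le tendsto_const_nhds hlim
    (fun k => zero_le) hbound

end Stmt19Aux

namespace Stmt19Aux

theorem main {X : Type*} [MeasurableSpace X] (μ : Measure X) [IsFiniteMeasure μ]
    (p : ℝ) (hp : 1 < p) (C : ℝ) (hC : 0 ≤ C)
    (φ : X × X → ℝ)
    (hφ : MemLp φ (ENNReal.ofReal p) (μ.prod μ))
    (hφ0 : ∀ᵐ z ∂(μ.prod μ), 0 ≤ φ z)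
    (τ : X → X → ℝ → ℝ)
    (hτmeas : ∀ r : ℝ, Measurable (fun z : X × X => τ z.1 z.2 r))
    (hτcont : ∀ᵐ z ∂(μ.prod μ), Continuous (fun r : ℝ => τ z.1 z.2 r))
    (hτgrowth : ∀ᵐ z ∂(μ.prod μ), ∀ r : ℝ, |τ z.1 z.2 r| ≤ φ z + C * |r|) :
    (∀ u : X → ℝ, MemLp u (ENNReal.ofReal p) μ →
      MemLp (fun x => ∫ y, τ x y (u y) ∂μ) (ENNReal.ofReal p) μ) ∧
    (∀ (u : ℕ → X → ℝ) (u₀ : X → ℝ),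
      (∀ n, MemLp (u n) (ENNReal.ofReal p) μ) →
      MemLp u₀ (ENNReal.ofReal p) μ →
      Tendsto (fun n => eLpNorm (fun y => u n y - u₀ y) (ENNReal.ofReal p) μ)
        atTop (nhds 0) →
      Tendsto (fun n => eLpNorm
          (fun x => (∫ y, τ x y (u n y) ∂μ) - ∫ y, τ x y (u₀ y) ∂μ)
          (ENNReal.ofReal p) μ)
        atTop (nhds 0)) := by
  classical
  have hp0 : (0:ℝ) < p := lt_trans one_pos hp
  have hp'0 : (ENNReal.ofReal p) ≠ 0 := by
    simp only [ne_eq, ENNReal.ofReal_eq_zero, not_le]; linarith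
  have hp't : (ENNReal.ofReal p) ≠ ∞ := ENNReal.ofReal_ne_top
  have hp'1 : 1 ≤ ENNReal.ofReal p := ENNReal.one_le_ofReal.2 hp.le
  -- measurable representative of φ
  set φm := hφ.1.mk φ with hφmdef
  have hφmm : Measurable φm := hφ.1.stronglyMeasurable_mk.measurable
  have hφm_ae : φ =ᵐ[μ.prod μ] φm := hφ.1.ae_eq_mk
  -- the full a.e. good set
  have hall : ∀ᵐ z ∂(μ.prod μ), (Continuous fun r => τ z.1 z.2 r) ∧
      (∀ r, |τ z.1 z.2 r| ≤ φ z + C * |r|) ∧ 0 ≤ φ z ∧ φ z = φm z := by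
    filter_upwards [hτcont, hτgrowth, hφ0, hφm_ae] with z h1 h2 h3 h4
    exact ⟨h1, h2, h3, h4⟩
  obtain ⟨N, hTN, hNm, hNnull⟩ := exists_measurable_superset_of_null (ae_iff.mp hall)
  have hNgood : ∀ z, z ∉ N → (Continuous fun r => τ z.1 z.2 r) ∧
      (∀ r, |τ z.1 z.2 r| ≤ φ z + C * |r|) ∧ 0 ≤ φ z ∧ φ z = φm z := by
    intro z hz
    by_contra h
    exact hz (hTN h)
  set g : (X × X) → ℝ → ℝ := fun z r => if z ∈ N then 0 else τ z.1 z.2 r with hgdef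
  set ψ : (X × X) → ℝ≥0∞ := fun z => if z ∈ N then 0 else ENNReal.ofReal (φm z) with hψdef
  set Ce := ENNReal.ofReal C with hCedef
  have hCe : Ce ≠ ∞ := ENNReal.ofReal_ne_top
  have hgc : ∀ z, Continuous fun r => g z r := by
    intro z
    by_cases hz : z ∈ N
    · simp only [hgdef, if_pos hz]; exact continuous_const
    · simp only [hgdef, if_neg hz]; exact (hNgood z hz).1
  have hgm : Measurable fun q : (X × X) × ℝ => g q.1 q.2 := by
    have h1 : ∀ r, Measurable fun z : X × X => g z r := fun r =>
      Measurable.ite hNm measurable_const (hτmeas r)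
    have h2 : Measurable (Function.uncurry fun (r : ℝ) (z : X × X) => g z r) :=
      measurable_uncurry_of_continuous_of_measurable (fun z => hgc z) h1
    exact h2.comp measurable_swap
  have hψm : Measurable ψ :=
    Measurable.ite hNm measurable_const (ENNReal.measurable_ofReal.comp hφmm)
  have hgrowth : ∀ z r, (‖g z r‖₊ : ℝ≥0∞) ≤ ψ z + Ce * ‖r‖₊ := by
    intro z r
    by_cases hz : z ∈ N
    · simp [hgdef, hψdef, if_pos hz]
    · obtain ⟨-, h2, h3, h4⟩ := hNgood z hz
      simp only [hgdef, hψdef, if_neg hz]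
      rw [← enorm_eq_nnnorm, ← enorm_eq_nnnorm, Real.enorm_eq_ofReal_abs, Real.enorm_eq_ofReal_abs]
      calc ENNReal.ofReal |τ z.1 z.2 r|
          ≤ ENNReal.ofReal (φ z + C * |r|) := ENNReal.ofReal_le_ofReal (h2 r)
        _ = ENNReal.ofReal (φm z + C * |r|) := by rw [h4]
        _ ≤ ENNReal.ofReal (φm z) + ENNReal.ofReal (C * |r|) := ENNReal.ofReal_add_le
        _ = ENNReal.ofReal (φm z) + Ce * ENNReal.ofReal |r| := by
            rw [ENNReal.ofReal_mul hC]
  have hψp : ∫⁻ z, ψ z ^ p ∂(μ.prod μ) ≠ ∞ := by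
    have hb : ∀ z, ψ z ^ p ≤ (‖φm z‖₊ : ℝ≥0∞) ^ p := by
      intro z
      refine ENNReal.rpow_le_rpow ?_ hp0.le
      by_cases hz : z ∈ N
      · simp [hψdef, if_pos hz]
      · simp only [hψdef, if_neg hz]
        rw [← enorm_eq_nnnorm, Real.enorm_eq_ofReal_abs]
        exact ENNReal.ofReal_le_ofReal (le_abs_self _)
    refine ne_top_of_le_ne_top ?_ (lintegral_mono hb)
    have hmem : MemLp φm (ENNReal.ofReal p) (μ.prod μ) := hφ.ae_eq hφm_ae
    have h5 := (eLpNorm_lt_top_iff_lintegral_rpow_enorm_lt_top hp'0 hp't).1 hmem.2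
    rw [ENNReal.toReal_ofReal hp0.le] at h5
    exact h5.ne
  have hNice : Nice μ p Ce g ψ := ⟨hgm, hgc, hψm, hψp, hgrowth⟩
  have hmemint : ∀ {w : X → ℝ}, MemLp w (ENNReal.ofReal p) μ →
      ∫⁻ y, (‖w y‖₊ : ℝ≥0∞) ^ p ∂μ ≠ ∞ := by
    intro w hmem
    have h5 := (eLpNorm_lt_top_iff_lintegral_rpow_enorm_lt_top hp'0 hp't).1 hmem.2
    rw [ENNReal.toReal_ofReal hp0.le] at h5
    exact h5.ne
  have hNae : ∀ᵐ z ∂(μ.prod μ), z ∉ N := by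
    rw [ae_iff]
    simpa only [not_not, Set.setOf_mem_eq] using hNnull
  have hbridge : ∀ (w w' : X → ℝ), w =ᵐ[μ] w' →
      (fun x => ∫ y, τ x y (w y) ∂μ) =ᵐ[μ] fun x => ∫ y, g (x, y) (w' y) ∂μ := by
    intro w w' hww'
    have h2 : ∀ᵐ z ∂(μ.prod μ), w z.2 = w' z.2 :=
      Measure.quasiMeasurePreserving_snd.tendsto_ae.eventually hww'
    filter_upwards [Measure.ae_ae_of_ae_prod (hNae.and h2)] with x hx
    refine integral_congr_ae ?_
    filter_upwards [hx] with y hy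
    simp only [hgdef, if_neg hy.1, hy.2]
  constructor
  · intro u hu
    have humm : Measurable (hu.1.mk u) := hu.1.stronglyMeasurable_mk.measurable
    have hueq : u =ᵐ[μ] hu.1.mk u := hu.1.ae_eq_mk
    have hum : MemLp (hu.1.mk u) (ENNReal.ofReal p) μ := hu.ae_eq hueq
    have h := hNice.memLp hp hCe humm (hmemint hum)
    exact h.ae_eq (hbridge u (hu.1.mk u) hueq).symm
  · intro u u₀ hun hu₀ hconv
    apply tendsto_of_subseq_tendsto
    intro ns hns
    have h0 : Tendsto (fun n => eLpNorm (fun y => u (ns n) y - u₀ y) (ENNReal.ofReal p) μ)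
        atTop (𝓝 0) := hconv.comp hns
    have hex : ∀ k : ℕ, ∀ᶠ m in atTop,
        eLpNorm (fun y => u (ns m) y - u₀ y) (ENNReal.ofReal p) μ < (2:ℝ≥0∞)⁻¹ ^ k := by
      intro k
      exact (tendsto_order.1 h0).2 _ (ENNReal.pow_pos (by simp) k)
    obtain ⟨ms, hms_mono, hms⟩ := extraction_forall_of_eventually hex
    set u₀m := hu₀.1.mk u₀ with hu₀mdef
    have hu₀mm : Measurable u₀m := hu₀.1.stronglyMeasurable_mk.measurable
    have hu₀eq : u₀ =ᵐ[μ] u₀m := hu₀.1.ae_eq_mk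
    have hu₀mem : MemLp u₀m (ENNReal.ofReal p) μ := hu₀.ae_eq hu₀eq
    set vm : ℕ → X → ℝ := fun k => (hun (ns (ms k))).1.mk (u (ns (ms k))) with hvmdef
    have hvmm : ∀ k, Measurable (vm k) := fun k =>
      (hun (ns (ms k))).1.stronglyMeasurable_mk.measurable
    have hveq : ∀ k, u (ns (ms k)) =ᵐ[μ] vm k := fun k => (hun (ns (ms k))).1.ae_eq_mk
    have hdiff : ∀ k, eLpNorm (fun y => vm k y - u₀m y) (ENNReal.ofReal p) μ ≤ (2:ℝ≥0∞)⁻¹ ^ k := by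
      intro k
      have heq : (fun y => u (ns (ms k)) y - u₀ y) =ᵐ[μ] fun y => vm k y - u₀m y :=
        (hveq k).sub hu₀eq
      rw [← eLpNorm_congr_ae heq]
      exact (hms k).le
    set G : X → ℝ≥0∞ := fun y => (‖u₀m y‖₊ : ℝ≥0∞) + ∑' k, (‖vm k y - u₀m y‖₊ : ℝ≥0∞)
      with hGdef
    have hGm : Measurable G :=
      (hu₀mm.enorm).add (Measurable.ennreal_tsum fun k => ((hvmm k).sub hu₀mm).enorm)
    set S : ℕ → X → ℝ≥0∞ := fun n y =>
      (‖u₀m y‖₊ : ℝ≥0∞) + ∑ k ∈ Finset.range n, (‖vm k y - u₀m y‖₊ : ℝ≥0∞) with hSdef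
    have hSm : ∀ n, Measurable (S n) := fun n =>
      (hu₀mm.enorm).add (Finset.measurable_sum _ fun k _ => ((hvmm k).sub hu₀mm).enorm)
    have hStend : ∀ y, Tendsto (fun n => S n y) atTop (𝓝 (G y)) := fun y =>
      (ENNReal.tendsto_nat_tsum _).const_add _
    have hSmono : ∀ y, Monotone fun n => S n y := fun y a b hab =>
      add_le_add_right (Finset.sum_le_sum_of_subset (Finset.range_subset_range.2 hab)) _
    -- bound on each partial sum
    have hbound : ∀ n, ∫⁻ y, S n y ^ p ∂μ ≤ (eLpNorm u₀m (ENNReal.ofReal p) μ + 2) ^ p := by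
      intro n
      set s : X → ℝ := fun y => ‖u₀m y‖ + ∑ k ∈ Finset.range n, ‖vm k y - u₀m y‖ with hsdef
      have hs_eq : ∀ y, S n y = (‖s y‖₊ : ℝ≥0∞) := by
        intro y
        have hnn : (0:ℝ) ≤ s y := by positivity
        refine Eq.symm ?_
        calc (‖s y‖₊ : ℝ≥0∞) = ENNReal.ofReal (s y) := by
              rw [← enorm_eq_nnnorm, ← ofReal_norm_eq_enorm, Real.norm_eq_abs, abs_of_nonneg hnn]
          _ = ENNReal.ofReal ‖u₀m y‖
              + ∑ k ∈ Finset.range n, ENNReal.ofReal ‖vm k y - u₀m y‖ := by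
              rw [hsdef, ENNReal.ofReal_add (norm_nonneg _) (by positivity),
                ENNReal.ofReal_sum_of_nonneg (fun i _ => norm_nonneg _)]
          _ = S n y := by
              rw [hSdef, ofReal_norm_eq_enorm]
              congr 1
              exact Finset.sum_congr rfl fun i _ => ofReal_norm_eq_enorm _
      have hsnorm : eLpNorm s (ENNReal.ofReal p) μ ≤ eLpNorm u₀m (ENNReal.ofReal p) μ + 2 := by
        have hsum_eq : (fun y => ∑ k ∈ Finset.range n, ‖vm k y - u₀m y‖)
            = ∑ k ∈ Finset.range n, (fun y => ‖vm k y - u₀m y‖) := by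
          funext y; simp
        have h1 : eLpNorm s (ENNReal.ofReal p) μ
            ≤ eLpNorm (fun y => ‖u₀m y‖) (ENNReal.ofReal p) μ
              + eLpNorm (fun y => ∑ k ∈ Finset.range n, ‖vm k y - u₀m y‖) (ENNReal.ofReal p) μ :=
          eLpNorm_add_le (hu₀mm.norm.stronglyMeasurable.aestronglyMeasurable)
            ((Finset.measurable_sum _ fun k _ =>
              ((hvmm k).sub hu₀mm).norm).stronglyMeasurable.aestronglyMeasurable) hp'1
        have h2 : eLpNorm (fun y => ‖u₀m y‖) (ENNReal.ofReal p) μ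
            = eLpNorm u₀m (ENNReal.ofReal p) μ := eLpNorm_norm u₀m
        have h3 : eLpNorm (fun y => ∑ k ∈ Finset.range n, ‖vm k y - u₀m y‖) (ENNReal.ofReal p) μ
            ≤ 2 := by
          rw [hsum_eq]
          calc eLpNorm (∑ k ∈ Finset.range n, fun y => ‖vm k y - u₀m y‖) (ENNReal.ofReal p) μ
              ≤ ∑ k ∈ Finset.range n,
                  eLpNorm (fun y => ‖vm k y - u₀m y‖) (ENNReal.ofReal p) μ :=
                eLpNorm_sum_le (fun k _ =>
                  ((hvmm k).sub hu₀mm).norm.stronglyMeasurable.aestronglyMeasurable) hp'1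
            _ = ∑ k ∈ Finset.range n, eLpNorm (fun y => vm k y - u₀m y) (ENNReal.ofReal p) μ :=
                Finset.sum_congr rfl fun k _ => eLpNorm_norm _
            _ ≤ ∑ k ∈ Finset.range n, (2:ℝ≥0∞)⁻¹ ^ k :=
                Finset.sum_le_sum fun k _ => hdiff k
            _ ≤ ∑' k, (2:ℝ≥0∞)⁻¹ ^ k := ENNReal.sum_le_tsum _
            _ = 2 := by
                rw [ENNReal.tsum_geometric, ENNReal.one_sub_inv_two, inv_inv]
        calc eLpNorm s (ENNReal.ofReal p) μ
            ≤ eLpNorm (fun y => ‖u₀m y‖) (ENNReal.ofReal p) μ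
              + eLpNorm (fun y => ∑ k ∈ Finset.range n, ‖vm k y - u₀m y‖)
                (ENNReal.ofReal p) μ := h1
          _ ≤ eLpNorm u₀m (ENNReal.ofReal p) μ + 2 := by rw [h2]; exact add_le_add_right h3 _
      have hcalc : ∫⁻ y, S n y ^ p ∂μ = eLpNorm s (ENNReal.ofReal p) μ ^ p := by
        rw [eLpNorm_eq_lintegral_rpow_enorm_toReal hp'0 hp't, ENNReal.toReal_ofReal hp0.le,
          rpow_one_div_cancel hp0]
        exact lintegral_congr fun y => by rw [hs_eq y]; rfl
      rw [hcalc]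
      exact ENNReal.rpow_le_rpow hsnorm hp0.le
    have hGp : ∫⁻ y, G y ^ p ∂μ ≠ ∞ := by
      have hGeq : ∀ y, G y ^ p = ⨆ n, S n y ^ p := by
        intro y
        refine (iSup_eq_of_tendsto (fun a b hab => ENNReal.rpow_le_rpow (hSmono y hab) hp0.le)
          ?_).symm
        have := ((ENNReal.continuous_rpow_const (y := p)).tendsto (G y)).comp (hStend y)
        simpa [Function.comp_def] using this
      have hmono : Monotone fun n => fun y => S n y ^ p := fun a b hab y =>
        ENNReal.rpow_le_rpow (hSmono y hab) hp0.le
      have hGlt : ∫⁻ y, G y ^ p ∂μ < ∞ :=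
        calc ∫⁻ y, G y ^ p ∂μ = ∫⁻ y, ⨆ n, S n y ^ p ∂μ := lintegral_congr fun y => hGeq y
          _ = ⨆ n, ∫⁻ y, S n y ^ p ∂μ :=
              lintegral_iSup (fun n => (hSm n).ennrpow_const p) hmono
          _ ≤ (eLpNorm u₀m (ENNReal.ofReal p) μ + 2) ^ p := iSup_le hbound
          _ < ∞ := ENNReal.rpow_lt_top_of_nonneg hp0.le
              (ENNReal.add_ne_top.2 ⟨hu₀mem.2.ne, ENNReal.ofNat_ne_top⟩)
      exact hGlt.ne
    have hdomv : ∀ k y, (‖vm k y‖₊ : ℝ≥0∞) ≤ G y := by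
      intro k y
      have hn : ‖vm k y‖₊ ≤ ‖u₀m y‖₊ + ‖vm k y - u₀m y‖₊ := by
        simpa using nnnorm_add_le (u₀m y) (vm k y - u₀m y)
      calc (‖vm k y‖₊ : ℝ≥0∞) ≤ (‖u₀m y‖₊ : ℝ≥0∞) + ‖vm k y - u₀m y‖₊ := by
            exact_mod_cast hn
        _ ≤ G y := add_le_add le_rfl (ENNReal.le_tsum k)
    have hdom0 : ∀ y, (‖u₀m y‖₊ : ℝ≥0∞) ≤ G y := fun y => le_self_add
    have hfinG : ∀ᵐ y ∂μ, G y ≠ ∞ := by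
      filter_upwards [ae_lt_top (hGm.ennrpow_const p) hGp] with y hy
      intro hGy
      rw [hGy, ENNReal.top_rpow_of_pos hp0] at hy
      exact lt_irrefl _ hy
    have hae : ∀ᵐ y ∂μ, Tendsto (fun k => vm k y) atTop (𝓝 (u₀m y)) := by
      filter_upwards [hfinG] with y hy
      have hsum : ∑' k, (‖vm k y - u₀m y‖₊ : ℝ≥0∞) ≠ ∞ := ne_top_of_le_ne_top hy le_add_self
      have h2 : Tendsto (fun k => (‖vm k y - u₀m y‖₊ : ℝ≥0∞)) atTop (𝓝 0) :=
        ENNReal.tendsto_atTop_zero_of_tsum_ne_top hsum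
      have h3 : Tendsto (fun k => ‖vm k y - u₀m y‖) atTop (𝓝 0) := by
        have h4 := (ENNReal.tendsto_toReal (by simp : (0:ℝ≥0∞) ≠ ∞)).comp h2
        simpa [Function.comp_def] using h4
      have h5 : Tendsto (fun k => vm k y - u₀m y) atTop (𝓝 0) :=
        tendsto_zero_iff_norm_tendsto_zero.2 h3
      have h6 := h5.add_const (u₀m y)
      simpa using h6
    have htends := hNice.tendsto hp hCe hvmm hu₀mm hGm hGp hdomv hdom0 hae
    refine ⟨ms, ?_⟩
    refine htends.congr fun k => ?_
    exact (eLpNorm_congr_ae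
      ((hbridge (u (ns (ms k))) (vm k) (hveq k)).sub (hbridge u₀ u₀m hu₀eq))).symm

end Stmt19Aux

theorem stmt19 (d : ℕ) (p : ℝ) (hp : 1 < p) (C : ℝ) (hC : 0 ≤ C)
    (Ω : Set (EuclideanSpace ℝ (Fin d)))
    (hΩb : Bornology.IsBounded Ω) (hΩm : MeasurableSet Ω)
    (φ : EuclideanSpace ℝ (Fin d) × EuclideanSpace ℝ (Fin d) → ℝ)
    (hφ : MemLp φ (ENNReal.ofReal p) ((volume.restrict Ω).prod (volume.restrict Ω)))
    (hφ0 : ∀ᵐ z ∂((volume.restrict Ω).prod (volume.restrict Ω)), 0 ≤ φ z)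
    (τ : EuclideanSpace ℝ (Fin d) → EuclideanSpace ℝ (Fin d) → ℝ → ℝ)
    (hτmeas : ∀ r : ℝ,
      Measurable (fun z : EuclideanSpace ℝ (Fin d) × EuclideanSpace ℝ (Fin d) => τ z.1 z.2 r))
    (hτcont : ∀ᵐ z ∂((volume.restrict Ω).prod (volume.restrict Ω)),
      Continuous (fun r : ℝ => τ z.1 z.2 r))
    (hτgrowth : ∀ᵐ z ∂((volume.restrict Ω).prod (volume.restrict Ω)),
      ∀ r : ℝ, |τ z.1 z.2 r| ≤ φ z + C * |r|) :
    (∀ u : EuclideanSpace ℝ (Fin d) → ℝ, MemLp u (ENNReal.ofReal p) (volume.restrict Ω) →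
      MemLp (fun x => ∫ y, τ x y (u y) ∂(volume.restrict Ω))
        (ENNReal.ofReal p) (volume.restrict Ω)) ∧
    (∀ (u : ℕ → EuclideanSpace ℝ (Fin d) → ℝ) (u₀ : EuclideanSpace ℝ (Fin d) → ℝ),
      (∀ n, MemLp (u n) (ENNReal.ofReal p) (volume.restrict Ω)) →
      MemLp u₀ (ENNReal.ofReal p) (volume.restrict Ω) →
      Tendsto (fun n => eLpNorm (fun y => u n y - u₀ y) (ENNReal.ofReal p) (volume.restrict Ω))
        atTop (nhds 0) →
      Tendsto (fun n => eLpNorm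
          (fun x => (∫ y, τ x y (u n y) ∂(volume.restrict Ω)) -
            ∫ y, τ x y (u₀ y) ∂(volume.restrict Ω))
          (ENNReal.ofReal p) (volume.restrict Ω))
        atTop (nhds 0)) := by
  haveI : IsFiniteMeasure (volume.restrict Ω) :=
    ⟨by rw [Measure.restrict_apply_univ]; exact hΩb.measure_lt_top⟩
  exact Stmt19Aux.main (volume.restrict Ω) p hp C hC φ hφ hφ0 τ hτmeas hτcont hτgrowth
end
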